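/- arXiv:1507.08306 — 8 statements merged into one kernel-verified Lean document; each statement's English description precedes it below -/
import Mathlib

section
/- Let K be a simplicial complex on a finite vertex set and let v, w be distinct vertices such that every facet (maximal face) of K contains either v or w. If σ is a face of K containing neither v nor w, and K is a pseudomanifold of dimension n−1 (every (n−2)-face is contained in exactly two facets, all facets have n vertices), then σ ∪ {v} is a face of K if and only if σ ∪ {w} is a face of K. -/
/-- `K` is an abstract simplicial complex: closed under taking subsets. -/
def IsComplex {V : Type*} (K : Set (Finset V)) : Prop :=
  ∀ s ∈ K, ∀ t, t ⊆ s → t ∈ K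

/-- A facet is a maximal face. -/
def IsFacet {V : Type*} (K : Set (Finset V)) (s : Finset V) : Prop :=
  s ∈ K ∧ ∀ t ∈ K, s ⊆ t → t = s

/-- `K` is a pseudomanifold of dimension `n - 1`: every facet has `n` vertices and every
face with `n - 1` vertices is contained in exactly two facets. -/
def IsPseudomanifold {V : Type*} (K : Set (Finset V)) (n : ℕ) : Prop :=
  (∀ s, IsFacet K s → s.card = n) ∧
  (∀ t ∈ K, t.card + 1 = n → {s | IsFacet K s ∧ t ⊆ s}.ncard = 2)

lemma exists_facet {V : Type*} [Fintype V] (K : Set (Finset V)) (s : Finset V)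
    (hs : s ∈ K) : ∃ F, IsFacet K F ∧ s ⊆ F := by
  have hfin : {t | t ∈ K ∧ s ⊆ t}.Finite := Set.toFinite _
  obtain ⟨F, hF, hmax⟩ := Set.Finite.exists_maximalFor Finset.card _ hfin ⟨s, hs, subset_rfl⟩
  refine ⟨F, ⟨hF.1, fun u hu hFu => ?_⟩, hF.2⟩
  have hu' : u ∈ {t | t ∈ K ∧ s ⊆ t} := ⟨hu, hF.2.trans hFu⟩
  have := hmax (j := u) hu' (Finset.card_le_card hFu)
  exact (Finset.eq_of_subset_of_card_le hFu this.ge).symm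

lemma key {V : Type*} [Fintype V] [DecidableEq V] (n : ℕ) (K : Set (Finset V))
    (hK : IsComplex K) (hPM : IsPseudomanifold K n) (v w : V)
    (hfac : ∀ s, IsFacet K s → v ∈ s ∨ w ∈ s)
    (σ : Finset V) (hv : v ∉ σ) (h : insert v σ ∈ K) : insert w σ ∈ K := by
  obtain ⟨F, hF, hsub⟩ := exists_facet K _ h
  have hvF : v ∈ F := hsub (Finset.mem_insert_self v σ)
  have hσF : σ ⊆ F := (Finset.subset_insert v σ).trans hsub
  by_cases hwF : w ∈ F
  · exact hK F hF.1 _ (Finset.insert_subset hwF hσF)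
  · set t := F.erase v with ht
    have htK : t ∈ K := hK F hF.1 t (Finset.erase_subset v F)
    have htc : t.card + 1 = n := by
      rw [ht, Finset.card_erase_add_one hvF]; exact hPM.1 F hF
    have h2 := hPM.2 t htK htc
    obtain ⟨a, b, hab, hset⟩ := Set.ncard_eq_two.mp h2
    have hFmem : F ∈ {s | IsFacet K s ∧ t ⊆ s} := ⟨hF, Finset.erase_subset v F⟩
    rw [hset] at hFmem
    -- pick the other facet
    obtain ⟨F', hF'mem, hF'ne⟩ : ∃ F', F' ∈ ({a, b} : Set (Finset V)) ∧ F' ≠ F := by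
      rcases hFmem with h1 | h1
      · exact ⟨b, Or.inr rfl, by rw [h1]; exact hab.symm⟩
      · exact ⟨a, Or.inl rfl, by rw [h1]; exact hab⟩
    rw [← hset] at hF'mem
    obtain ⟨hF', htF'⟩ := hF'mem
    have hvF' : v ∉ F' := by
      intro hvF'
      apply hF'ne
      have : F ⊆ F' := by
        rw [← Finset.insert_erase hvF]
        exact Finset.insert_subset hvF' htF'
      have hcard : F'.card ≤ F.card := by rw [hPM.1 F hF, hPM.1 F' hF']
      exact (Finset.eq_of_subset_of_card_le this hcard).symm
    have hwF' : w ∈ F' := (hfac F' hF').resolve_left hvF'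
    have hσt : σ ⊆ t := fun x hx =>
      Finset.mem_erase.mpr ⟨fun hxv => hv (hxv ▸ hx), hσF hx⟩
    exact hK F' hF'.1 _ (Finset.insert_subset hwF' (hσt.trans htF'))

theorem stmt_0 {V : Type*} [Fintype V] [DecidableEq V] (n : ℕ) (K : Set (Finset V))
    (hK : IsComplex K) (hPM : IsPseudomanifold K n) (v w : V) (hvw : v ≠ w)
    (hfac : ∀ s, IsFacet K s → v ∈ s ∨ w ∈ s)
    (σ : Finset V) (hσ : σ ∈ K) (hv : v ∉ σ) (hw : w ∉ σ) :
    insert v σ ∈ K ↔ insert w σ ∈ K := by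
  constructor
  · exact key n K hK hPM v w hfac σ hv
  · exact key n K hK hPM w v (fun s hs => (hfac s hs).symm) σ hw
end

section
/- Let K be an abstract simplicial complex that is a pseudomanifold of dimension n−1, and let v, w be distinct vertices such that every facet of K contains either v or w. If {v,w} is not a face of K, then K is the simplicial join of the induced subcomplex on V∖{v,w} with the 0-dimensional complex on the two vertices {v},{w} (i.e., K is a suspension). -/
/-- If every facet of the pseudomanifold `K` contains `v` or `w` and `{v, w}` is not a face,
then `K` is the join of the induced subcomplex on the vertices other than `v, w` with the
two-point complex `∂I = {∅, {v}, {w}}`, i.e. `K` is a suspension. -/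
theorem stmt_1 {V : Type*} [Fintype V] [DecidableEq V] (n : ℕ) (K : Set (Finset V))
    (hK : IsComplex K) (hPM : IsPseudomanifold K n) (v w : V) (hvw : v ≠ w)
    (hfac : ∀ s, IsFacet K s → v ∈ s ∨ w ∈ s)
    (hnf : ({v, w} : Finset V) ∉ K) :
    K = {s | ∃ σ ∈ K, v ∉ σ ∧ w ∉ σ ∧
          (s = σ ∨ s = insert v σ ∨ s = insert w σ)} := by
  -- every face is contained in a facet
  have exists_facet : ∀ σ ∈ K, ∃ F, IsFacet K F ∧ σ ⊆ F := by
    intro σ hσ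
    have hfin : {s : Finset V | s ∈ K ∧ σ ⊆ s}.Finite := Set.toFinite _
    obtain ⟨F, hFS, hmax⟩ := Set.Finite.exists_maximalFor Finset.card _ hfin ⟨σ, hσ, subset_rfl⟩
    refine ⟨F, ⟨hFS.1, fun t ht hFt => ?_⟩, hFS.2⟩
    have := hmax (j := t) ⟨ht, hFS.2.trans hFt⟩ (Finset.card_le_card hFt)
    exact (Finset.eq_of_subset_of_card_le hFt this).symm
  -- the key lemma
  have key : ∀ (v w : V), (∀ s, IsFacet K s → v ∈ s ∨ w ∈ s) →
      ({v, w} : Finset V) ∉ K → ∀ (σ F : Finset V), IsFacet K F → σ ⊆ F → v ∈ F →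
      v ∉ σ → w ∉ σ → insert w σ ∈ K := by
    intro v w hfac hnf σ F hF hσF hvF hvσ hwσ
    have hcF : F.card = n := hPM.1 F hF
    have hwF : w ∉ F := fun hwF =>
      hnf (hK F hF.1 _ (Finset.insert_subset hvF (Finset.singleton_subset_iff.2 hwF)))
    set t := F.erase v with ht
    have htK : t ∈ K := hK F hF.1 t (Finset.erase_subset _ _)
    have hcard : t.card + 1 = n := by
      rw [ht, Finset.card_erase_of_mem hvF]
      have hpos : 0 < F.card := Finset.card_pos.2 ⟨v, hvF⟩
      omega
    have h2 := hPM.2 t htK hcard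
    rw [Set.ncard_eq_two] at h2
    obtain ⟨a, b, hab, hset⟩ := h2
    have hFmem : F ∈ {s | IsFacet K s ∧ t ⊆ s} := ⟨hF, Finset.erase_subset _ _⟩
    rw [hset] at hFmem
    -- pick the other facet
    obtain ⟨F', hF'mem, hF'ne⟩ : ∃ F', (IsFacet K F' ∧ t ⊆ F') ∧ F' ≠ F := by
      rcases hFmem with h | h
      · refine ⟨b, ?_, by rw [h]; exact hab.symm⟩
        have : b ∈ ({a, b} : Set (Finset V)) := by simp
        rw [← hset] at this; exact this
      · refine ⟨a, ?_, by rw [h]; exact hab⟩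
        have : a ∈ ({a, b} : Set (Finset V)) := by simp
        rw [← hset] at this; exact this
    obtain ⟨hF', htF'⟩ := hF'mem
    have hvF' : v ∉ F' := by
      intro hv
      apply hF'ne
      have hFF' : F ⊆ F' := by
        rw [← Finset.insert_erase hvF]
        exact Finset.insert_subset hv htF'
      have : F'.card = n := hPM.1 F' hF'
      exact (Finset.eq_of_subset_of_card_le hFF' (by omega)).symm
    have hwF' : w ∈ F' := (hfac F' hF').resolve_left hvF'
    have hσt : σ ⊆ t := Finset.subset_erase.2 ⟨hσF, hvσ⟩
    exact hK F' hF'.1 _ (Finset.insert_subset hwF' (hσt.trans htF'))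
  have hfac' : ∀ s, IsFacet K s → w ∈ s ∨ v ∈ s := fun s hs => (hfac s hs).symm
  have hnf' : ({w, v} : Finset V) ∉ K := by rwa [Finset.pair_comm]
  -- given σ ∈ K avoiding v, w, both insertions are faces
  have both : ∀ σ ∈ K, v ∉ σ → w ∉ σ → insert v σ ∈ K ∧ insert w σ ∈ K := by
    intro σ hσ hv hw
    obtain ⟨F, hF, hσF⟩ := exists_facet σ hσ
    rcases hfac F hF with hvF | hwF
    · exact ⟨hK F hF.1 _ (Finset.insert_subset hvF hσF),
        key v w hfac hnf σ F hF hσF hvF hv hw⟩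
    · exact ⟨key w v hfac' hnf' σ F hF hσF hwF hw hv,
        hK F hF.1 _ (Finset.insert_subset hwF hσF)⟩
  ext s
  constructor
  · intro hs
    by_cases hvs : v ∈ s <;> by_cases hws : w ∈ s
    · exact absurd (hK s hs _ (Finset.insert_subset hvs
        (Finset.singleton_subset_iff.2 hws))) hnf
    · refine ⟨s.erase v, hK s hs _ (Finset.erase_subset _ _),
        Finset.notMem_erase _ _, fun h => hws (Finset.mem_of_mem_erase h), ?_⟩
      exact Or.inr (Or.inl (Finset.insert_erase hvs).symm)
    · refine ⟨s.erase w, hK s hs _ (Finset.erase_subset _ _),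
        fun h => hvs (Finset.mem_of_mem_erase h), Finset.notMem_erase _ _, ?_⟩
      exact Or.inr (Or.inr (Finset.insert_erase hws).symm)
    · exact ⟨s, hs, hvs, hws, Or.inl rfl⟩
  · rintro ⟨σ, hσ, hv, hw, rfl | rfl | rfl⟩
    · exact hσ
    · exact (both σ hσ hv hw).1
    · exact (both σ hσ hv hw).2
end

section
/- Let K be a simplicial complex on vertex set [m] with minimal non-faces M, and let J = (j₁,…,jₘ) be an m-tuple of positive integers. Then the simplicial wedge wed_v(K) = (I ⋆ link_K{v}) ∪ (∂I ⋆ (K∖{v})), where I is a 1-simplex on new vertices v₁,v₂, equals K(J) for J the m-tuple with 2 in position v and 1 elsewhere, where K(J) is the complex whose minimal non-faces are obtained by replacing each vertex i in a minimal non-face of K with the set {i₁,…,i_{j_i}}. -/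
/-- A minimal non-face of `K`: not a face, but all proper subsets are faces. -/
def MinNonFace {V : Type*} (K : Set (Finset V)) (N : Finset V) : Prop :=
  N ∉ K ∧ ∀ t, t ⊂ N → t ∈ K

/-- The simplicial wedge `wed_v K = (I ⋆ link_K {v}) ∪ (∂I ⋆ (K ∖ {v}))`, where `I` is the
1-simplex on the two new vertices `v₁ = Sum.inl v` and `v₂ = Sum.inr ()`.  A face is a union
`a ∪ τ` with `a ⊆ {v₁, v₂}` and `τ ∈ link_K {v}` (i.e. `insert v τ ∈ K`), or with
`a.card ≤ 1` (a face of `∂I`) and `τ ∈ K ∖ {v}`. -/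
def wed {V : Type*} [DecidableEq V] (K : Set (Finset V)) (v : V) :
    Set (Finset (V ⊕ Unit)) :=
  {s | ∃ a : Finset (V ⊕ Unit), a ⊆ ({Sum.inl v, Sum.inr ()} : Finset (V ⊕ Unit)) ∧
    ∃ τ : Finset V, v ∉ τ ∧ τ ∈ K ∧ s = a ∪ τ.image Sum.inl ∧
      (insert v τ ∈ K ∨ a.card ≤ 1)}

/-- Replace each vertex `i` of a (non-)face by its `j_i` copies; for `J` having a `2` exactly
at `v`, vertex `v` is replaced by the two copies `v₁ = Sum.inl v`, `v₂ = Sum.inr ()` and every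
other vertex by its single copy. -/
def fatten {V : Type*} [DecidableEq V] (v : V) (N : Finset V) : Finset (V ⊕ Unit) :=
  N.biUnion fun i =>
    if i = v then ({Sum.inl i, Sum.inr ()} : Finset (V ⊕ Unit)) else {Sum.inl i}

lemma exists_minNonFace {V : Type*} [DecidableEq V] (K : Set (Finset V)) (N : Finset V)
    (hN : N ∉ K) : ∃ M ⊆ N, MinNonFace K M := by
  classical
  induction N using Finset.strongInduction with
  | _ N ih =>
    by_cases h : ∀ t, t ⊂ N → t ∈ K
    · exact ⟨N, subset_rfl, hN, h⟩
    · push_neg at h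
      obtain ⟨t, ht, htK⟩ := h
      obtain ⟨M, hM, hMm⟩ := ih t ht htK
      exact ⟨M, hM.trans ht.subset, hMm⟩

lemma mem_fatten {V : Type*} [DecidableEq V] (v : V) (N : Finset V) (x : V ⊕ Unit) :
    x ∈ fatten v N ↔ (∃ i ∈ N, x = Sum.inl i) ∨ (v ∈ N ∧ x = Sum.inr ()) := by
  simp only [fatten, Finset.mem_biUnion]
  constructor
  · rintro ⟨i, hi, hx⟩
    split at hx
    · rename_i h; subst h
      simp only [Finset.mem_insert, Finset.mem_singleton] at hx
      rcases hx with hx | hx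
      · exact Or.inl ⟨i, hi, hx⟩
      · exact Or.inr ⟨hi, hx⟩
    · simp only [Finset.mem_singleton] at hx
      exact Or.inl ⟨i, hi, hx⟩
  · rintro (⟨i, hi, rfl⟩ | ⟨hv, rfl⟩)
    · exact ⟨i, hi, by split <;> simp⟩
    · exact ⟨v, hv, by simp⟩

/-- The wedge `wed_v K` equals `K(J)` for `J` the tuple with `2` in position `v` and `1`
elsewhere: its faces are exactly the vertex sets containing no fattened minimal non-face
of `K`. -/
theorem stmt_2 {V : Type*} [Fintype V] [DecidableEq V] (K : Set (Finset V))
    (hK : IsComplex K) (hne : ∅ ∈ K) (v : V) :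
    wed K v = {s | ∀ N : Finset V, MinNonFace K N → ¬ fatten v N ⊆ s} := by
    classical
  ext s
  simp only [wed, Set.mem_setOf_eq]
  constructor
  · rintro ⟨a, ha, τ, hvτ, hτK, rfl, hor⟩ N hN hsub
    have hNs : ∀ i ∈ N, Sum.inl i ∈ a ∪ τ.image Sum.inl := by
      intro i hi
      exact hsub ((mem_fatten v N _).2 (Or.inl ⟨i, hi, rfl⟩))
    have hNσ : ∀ i ∈ N, i = v ∨ i ∈ τ := by
      intro i hi
      rcases Finset.mem_union.1 (hNs i hi) with h | h
      · have := ha h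
        simp only [Finset.mem_insert, Finset.mem_singleton] at this
        rcases this with h' | h'
        · exact Or.inl (Sum.inl_injective h')
        · exact absurd h' (by simp)
      · obtain ⟨j, hj, hji⟩ := Finset.mem_image.1 h
        exact Or.inr (Sum.inl_injective hji ▸ hj)
    rcases hor with h | h
    · refine hN.1 (hK _ h N ?_)
      intro i hi
      rcases hNσ i hi with rfl | hi'
      · exact Finset.mem_insert_self _ _
      · exact Finset.mem_insert_of_mem hi'
    · by_cases hv : v ∈ N
      · have h1 : Sum.inr () ∈ a := by
          have := hsub ((mem_fatten v N _).2 (Or.inr ⟨hv, rfl⟩))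
          rcases Finset.mem_union.1 this with h' | h'
          · exact h'
          · obtain ⟨j, _, hji⟩ := Finset.mem_image.1 h'; exact absurd hji (by simp)
        have h2 : Sum.inl v ∈ a := by
          rcases Finset.mem_union.1 (hNs v hv) with h' | h'
          · exact h'
          · obtain ⟨j, hj, hji⟩ := Finset.mem_image.1 h'
            exact absurd (Sum.inl_injective hji ▸ hj) hvτ
        have : ({Sum.inl v, Sum.inr ()} : Finset (V ⊕ Unit)) ⊆ a := by
          intro x hx
          simp only [Finset.mem_insert, Finset.mem_singleton] at hx
          rcases hx with rfl | rfl
          · exact h2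
          · exact h1
        have hc : 2 ≤ a.card := by
          calc 2 = ({Sum.inl v, Sum.inr ()} : Finset (V ⊕ Unit)).card := by simp
            _ ≤ a.card := Finset.card_le_card this
        omega
      · refine hN.1 (hK _ hτK N ?_)
        intro i hi
        rcases hNσ i hi with rfl | hi'
        · exact absurd hi hv
        · exact hi'
  · intro h
    set σ : Finset V := s.preimage Sum.inl Sum.inl_injective.injOn with hσ
    have hmemσ : ∀ i : V, i ∈ σ ↔ Sum.inl i ∈ s := fun i => Finset.mem_preimage
    set τ : Finset V := σ.erase v with hτ
    set a : Finset (V ⊕ Unit) :=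
      s.filter (fun x => x = Sum.inl v ∨ x = Sum.inr ()) with haa
    have ha : a ⊆ ({Sum.inl v, Sum.inr ()} : Finset (V ⊕ Unit)) := by
      intro x hx
      have := (Finset.mem_filter.1 hx).2
      simpa using this
    have hvτ : v ∉ τ := Finset.notMem_erase _ _
    have hτK : τ ∈ K := by
      by_contra hc
      obtain ⟨M, hMτ, hMm⟩ := exists_minNonFace K τ hc
      refine h M hMm ?_
      intro x hx
      rcases (mem_fatten v M x).1 hx with ⟨i, hi, rfl⟩ | ⟨hvM, rfl⟩
      · exact (hmemσ i).1 (Finset.mem_of_mem_erase (hMτ hi))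
      · exact absurd (hMτ hvM) hvτ
    have hse : s = a ∪ τ.image Sum.inl := by
      ext x
      constructor
      · intro hx
        rcases x with i | u
        · by_cases hiv : i = v
          · subst hiv
            exact Finset.mem_union_left _ (Finset.mem_filter.2 ⟨hx, Or.inl rfl⟩)
          · refine Finset.mem_union_right _ (Finset.mem_image.2 ⟨i, ?_, rfl⟩)
            exact Finset.mem_erase.2 ⟨hiv, (hmemσ i).2 hx⟩
        · exact Finset.mem_union_left _ (Finset.mem_filter.2 ⟨hx, Or.inr (by simp)⟩)
      · intro hx
        rcases Finset.mem_union.1 hx with hx | hx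
        · exact (Finset.mem_filter.1 hx).1
        · obtain ⟨i, hi, rfl⟩ := Finset.mem_image.1 hx
          exact (hmemσ i).1 (Finset.mem_of_mem_erase hi)
    refine ⟨a, ha, τ, hvτ, hτK, hse, ?_⟩
    by_cases hins : insert v τ ∈ K
    · exact Or.inl hins
    · refine Or.inr ?_
      by_contra hcard
      push_neg at hcard
      have hae : a = ({Sum.inl v, Sum.inr ()} : Finset (V ⊕ Unit)) :=
        Finset.eq_of_subset_of_card_le ha (by simp; omega)
      have hvs : Sum.inl v ∈ s := by
        have : Sum.inl v ∈ a := by rw [hae]; simp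
        exact (Finset.mem_filter.1 this).1
      have hus : Sum.inr () ∈ s := by
        have : Sum.inr () ∈ a := by rw [hae]; simp
        exact (Finset.mem_filter.1 this).1
      have hσins : σ = insert v τ := by
        rw [hτ]
        rw [Finset.insert_erase ((hmemσ v).2 hvs)]
      obtain ⟨M, hMσ, hMm⟩ := exists_minNonFace K (insert v τ) hins
      refine h M hMm ?_
      intro x hx
      rcases (mem_fatten v M x).1 hx with ⟨i, hi, rfl⟩ | ⟨_, rfl⟩
      · exact (hmemσ i).1 (hσins ▸ hMσ hi)
      · exact hus
end

section
/- The wedge operation does not change the number of minimal non-faces: the minimal non-faces of wed_v(K) are in bijection with the minimal non-faces of K. -/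
namespace WedProof

variable {V : Type*} [DecidableEq V]

noncomputable def core (v : V) (s : Finset (V ⊕ Unit)) : Finset V :=
  (s.preimage Sum.inl Sum.inl_injective.injOn).erase v

lemma mem_core {v : V} {s : Finset (V ⊕ Unit)} {x : V} :
    x ∈ core v s ↔ x ≠ v ∧ Sum.inl x ∈ s := by
  simp [core]

lemma not_mem_core (v : V) (s : Finset (V ⊕ Unit)) : v ∉ core v s := by simp [mem_core]

lemma mem_wed {K : Set (Finset V)} {v : V} {s : Finset (V ⊕ Unit)} :
    s ∈ wed K v ↔ core v s ∈ K ∧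
      (Sum.inl v ∈ s → Sum.inr () ∈ s → insert v (core v s) ∈ K) := by
  constructor
  · rintro ⟨a, ha, τ, hvτ, hτK, rfl, hcond⟩
    have hcore : core v (a ∪ τ.image Sum.inl) = τ := by
      ext x
      simp only [mem_core, Finset.mem_union, Finset.mem_image]
      constructor
      · rintro ⟨hx, hx' | ⟨y, hy, hxy⟩⟩
        · have := ha hx'
          simp only [Finset.mem_insert, Finset.mem_singleton] at this
          rcases this with h | h
          · exact absurd (Sum.inl_injective h) hx
          · exact absurd h (by simp)
        · cases Sum.inl_injective hxy; exact hy
      · intro hx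
        exact ⟨fun h => hvτ (h ▸ hx), Or.inr ⟨x, hx, rfl⟩⟩
    rw [hcore]
    refine ⟨hτK, fun h1 h2 => ?_⟩
    rcases hcond with h | h
    · exact h
    · exfalso
      have hv1 : Sum.inl v ∈ a := by
        rcases Finset.mem_union.1 h1 with h' | h'
        · exact h'
        · simp only [Finset.mem_image] at h'
          obtain ⟨y, hy, hxy⟩ := h'
          cases Sum.inl_injective hxy; exact absurd hy hvτ
      have hv2 : Sum.inr () ∈ a := by
        rcases Finset.mem_union.1 h2 with h' | h'
        · exact h'
        · simp at h'
      have hsub : ({Sum.inl v, Sum.inr ()} : Finset (V ⊕ Unit)) ⊆ a := by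
        intro x hx
        simp only [Finset.mem_insert, Finset.mem_singleton] at hx
        rcases hx with rfl | rfl <;> assumption
      have h2le := Finset.card_le_card hsub
      have : ({Sum.inl v, Sum.inr ()} : Finset (V ⊕ Unit)).card = 2 := by
        rw [Finset.card_insert_of_notMem (by simp), Finset.card_singleton]
      omega
  · rintro ⟨h1, h2⟩
    refine ⟨s ∩ {Sum.inl v, Sum.inr ()}, Finset.inter_subset_right, core v s,
      not_mem_core v s, h1, ?_, ?_⟩
    · ext x
      simp only [Finset.mem_union, Finset.mem_inter, Finset.mem_insert,
        Finset.mem_singleton, Finset.mem_image, mem_core]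
      constructor
      · intro hx
        rcases x with x | u
        · by_cases hxv : x = v
          · subst hxv; exact Or.inl ⟨hx, Or.inl rfl⟩
          · exact Or.inr ⟨x, ⟨hxv, hx⟩, rfl⟩
        · cases u; exact Or.inl ⟨hx, Or.inr rfl⟩
      · rintro (⟨hx, _⟩ | ⟨y, ⟨_, hy⟩, rfl⟩)
        · exact hx
        · exact hy
    · by_cases hb : Sum.inl v ∈ s ∧ Sum.inr () ∈ s
      · exact Or.inl (h2 hb.1 hb.2)
      · right
        rw [not_and_or] at hb
        refine Finset.card_le_one.2 fun a ha b hb' => ?_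
        simp only [Finset.mem_inter, Finset.mem_insert, Finset.mem_singleton] at ha hb'
        rcases hb with h | h
        · rcases ha.2 with rfl | rfl
          · exact absurd ha.1 h
          · rcases hb'.2 with rfl | rfl
            · exact absurd hb'.1 h
            · rfl
        · rcases ha.2 with rfl | rfl
          · rcases hb'.2 with rfl | rfl
            · rfl
            · exact absurd hb'.1 h
          · exact absurd ha.1 h

lemma core_image {v : V} {M : Finset V} (hv : v ∉ M) : core v (M.image Sum.inl) = M := by
  ext x
  simp only [mem_core, Finset.mem_image]
  constructor
  · rintro ⟨hx, y, hy, hxy⟩; cases Sum.inl_injective hxy; exact hy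
  · intro hx; exact ⟨fun h => hv (h ▸ hx), x, hx, rfl⟩

/-- The "wedge point" set `{v₁, v₂} ∪ inl(T)`. -/
def wpt (v : V) (T : Finset V) : Finset (V ⊕ Unit) :=
  insert (Sum.inl v) (insert (Sum.inr ()) (T.image Sum.inl))

lemma mem_wpt_inl {v x : V} {T : Finset V} :
    Sum.inl x ∈ wpt v T ↔ x = v ∨ x ∈ T := by
  simp only [wpt, Finset.mem_insert, Finset.mem_image]
  constructor
  · rintro (h | h | ⟨y, hy, hxy⟩)
    · exact Or.inl (Sum.inl_injective h)
    · exact absurd h (by simp)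
    · cases Sum.inl_injective hxy; exact Or.inr hy
  · rintro (rfl | h)
    · exact Or.inl rfl
    · exact Or.inr (Or.inr ⟨x, h, rfl⟩)

lemma inl_v_mem_wpt {v : V} {T : Finset V} : Sum.inl v ∈ wpt v T := by
  simp [wpt]

lemma inr_mem_wpt {v : V} {T : Finset V} : Sum.inr () ∈ wpt v T := by
  simp [wpt]

lemma core_wpt {v : V} {T : Finset V} (hv : v ∉ T) : core v (wpt v T) = T := by
  ext x
  simp only [mem_core, mem_wpt_inl]
  constructor
  · rintro ⟨hx, rfl | h⟩
    · exact absurd rfl hx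
    · exact h
  · intro hx; exact ⟨fun h => hv (h ▸ hx), Or.inr hx⟩

lemma core_erase_inl {v : V} {N : Finset (V ⊕ Unit)} :
    core v (N.erase (Sum.inl v)) = core v N := by
  ext x
  simp only [mem_core, Finset.mem_erase]
  constructor
  · rintro ⟨hx, _, h⟩; exact ⟨hx, h⟩
  · rintro ⟨hx, h⟩; exact ⟨hx, fun h' => hx (Sum.inl_injective h'), h⟩

lemma core_erase_inr {v : V} {N : Finset (V ⊕ Unit)} :
    core v (N.erase (Sum.inr ())) = core v N := by
  ext x
  simp only [mem_core, Finset.mem_erase]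
  constructor
  · rintro ⟨hx, _, h⟩; exact ⟨hx, h⟩
  · rintro ⟨hx, h⟩; exact ⟨hx, by simp, h⟩

lemma eq_image_core {v : V} {N : Finset (V ⊕ Unit)} (h1 : Sum.inl v ∉ N)
    (h2 : Sum.inr () ∉ N) : N = (core v N).image Sum.inl := by
  ext x
  simp only [Finset.mem_image, mem_core]
  constructor
  · intro hx
    rcases x with x | u
    · exact ⟨x, ⟨fun h => h1 (h ▸ hx), hx⟩, rfl⟩
    · cases u; exact absurd hx h2
  · rintro ⟨y, ⟨_, hy⟩, rfl⟩; exact hy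

lemma eq_wpt_core {v : V} {N : Finset (V ⊕ Unit)} (h1 : Sum.inl v ∈ N)
    (h2 : Sum.inr () ∈ N) : N = wpt v (core v N) := by
  ext x
  rcases x with x | u
  · rw [mem_wpt_inl, mem_core]
    constructor
    · intro hx
      by_cases hxv : x = v
      · exact Or.inl hxv
      · exact Or.inr ⟨hxv, hx⟩
    · rintro (rfl | ⟨_, hx⟩)
      · exact h1
      · exact hx
  · cases u
    simp only [inr_mem_wpt, iff_true]
    exact h2

lemma wpt_ssubset {v : V} {T T' : Finset V} (hv : v ∉ T') (h : T ⊂ T') :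
    wpt v T ⊂ wpt v T' := by
  constructor
  · intro x hx
    rcases x with x | u
    · rw [mem_wpt_inl] at hx ⊢
      rcases hx with rfl | hx
      · exact Or.inl rfl
      · exact Or.inr (h.subset hx)
    · cases u; exact inr_mem_wpt
  · intro hsub
    obtain ⟨x, hx', hx⟩ := Finset.exists_of_ssubset h
    have : Sum.inl x ∈ wpt v T := hsub (mem_wpt_inl.2 (Or.inr hx'))
    rw [mem_wpt_inl] at this
    rcases this with rfl | h'
    · exact hv hx'
    · exact hx h'

variable {K : Set (Finset V)} {v : V}

lemma mem_iff_mem {N : Finset (V ⊕ Unit)} (hN : MinNonFace (wed K v) N) :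
    Sum.inl v ∈ N ↔ Sum.inr () ∈ N := by
  obtain ⟨hNF, hmin⟩ := hN
  constructor
  · intro h1
    by_contra h2
    have hface := hmin _ (Finset.erase_ssubset h1)
    rw [mem_wed, core_erase_inl] at hface
    exact hNF (mem_wed.2 ⟨hface.1, fun _ h2' => absurd h2' h2⟩)
  · intro h2
    by_contra h1
    have hface := hmin _ (Finset.erase_ssubset h2)
    rw [mem_wed, core_erase_inr] at hface
    exact hNF (mem_wed.2 ⟨hface.1, fun h1' _ => absurd h1' h1⟩)

lemma case_out {N : Finset (V ⊕ Unit)} (hN : MinNonFace (wed K v) N)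
    (h2 : Sum.inr () ∉ N) :
    MinNonFace K (core v N) ∧ N = (core v N).image Sum.inl := by
  have h1 : Sum.inl v ∉ N := fun h => h2 ((mem_iff_mem hN).1 h)
  have hrep := eq_image_core h1 h2
  obtain ⟨hNF, hmin⟩ := hN
  refine ⟨⟨fun hc => hNF (mem_wed.2 ⟨hc, fun h1' => absurd h1' h1⟩), fun t ht => ?_⟩, hrep⟩
  have htsub : t.image Sum.inl ⊂ N := by
    rw [hrep]
    exact (Finset.image_ssubset_image Sum.inl_injective).2 ht
  have hface := hmin _ htsub
  rw [mem_wed] at hface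
  have hv : v ∉ t := fun hvt => not_mem_core v N (ht.subset hvt)
  rw [core_image hv] at hface
  exact hface.1

lemma case_in {N : Finset (V ⊕ Unit)} (hK : IsComplex K)
    (hN : MinNonFace (wed K v) N) (h2 : Sum.inr () ∈ N) :
    MinNonFace K (insert v (core v N)) ∧ N = wpt v (core v N) := by
  have h1 : Sum.inl v ∈ N := (mem_iff_mem hN).2 h2
  have hrep := eq_wpt_core h1 h2
  obtain ⟨hNF, hmin⟩ := hN
  have hcoreK : core v N ∈ K := by
    have hface := hmin _ (Finset.erase_ssubset h2)
    rw [mem_wed, core_erase_inr] at hface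
    exact hface.1
  refine ⟨⟨fun hc => hNF (mem_wed.2 ⟨hcoreK, fun _ _ => hc⟩), fun t ht => ?_⟩, hrep⟩
  by_cases hvt : v ∈ t
  · have hTsubC : t.erase v ⊂ core v N := by
      constructor
      · intro x hx
        rw [Finset.mem_erase] at hx
        have := ht.subset hx.2
        rw [Finset.mem_insert] at this
        rcases this with rfl | h
        · exact absurd rfl hx.1
        · exact h
      · intro hsub
        have : insert v (core v N) ⊆ t := by
          intro x hx
          rw [Finset.mem_insert] at hx
          rcases hx with rfl | hx
          · exact hvt
          · have := hsub hx
            rw [Finset.mem_erase] at this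
            exact this.2
        exact ht.not_subset this
    have hssub : wpt v (t.erase v) ⊂ N := by
      rw [hrep]
      exact wpt_ssubset (not_mem_core v N) hTsubC
    have hface := hmin _ hssub
    rw [mem_wed, core_wpt (Finset.notMem_erase v t)] at hface
    have := hface.2 inl_v_mem_wpt inr_mem_wpt
    rwa [Finset.insert_erase hvt] at this
  · have : t ⊆ core v N := by
      intro x hx
      have := ht.subset hx
      rw [Finset.mem_insert] at this
      rcases this with rfl | h
      · exact absurd hx hvt
      · exact h
    exact hK _ hcoreK t this

lemma out_min {M : Finset V} (hK : IsComplex K) (hM : MinNonFace K M) (hv : v ∉ M) :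
    MinNonFace (wed K v) (M.image Sum.inl) := by
  constructor
  · intro h
    rw [mem_wed, core_image hv] at h
    exact hM.1 h.1
  · intro t ht
    have h1 : Sum.inl v ∉ t := by
      intro h
      have := ht.subset h
      rw [Finset.mem_image] at this
      obtain ⟨y, hy, hxy⟩ := this
      cases Sum.inl_injective hxy
      exact hv hy
    have h2 : Sum.inr () ∉ t := by
      intro h
      have := ht.subset h
      rw [Finset.mem_image] at this
      obtain ⟨y, -, hxy⟩ := this
      exact Sum.inl_ne_inr hxy
    have hrep := eq_image_core h1 h2
    have hcsub : core v t ⊂ M := by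
      rw [← Finset.image_ssubset_image (f := (Sum.inl : V → V ⊕ Unit)) Sum.inl_injective, ← hrep]
      exact ht
    rw [mem_wed]
    exact ⟨hM.2 _ hcsub, fun h1' => absurd h1' h1⟩

lemma in_min {M : Finset V} (hK : IsComplex K) (hM : MinNonFace K M) (hv : v ∈ M) :
    MinNonFace (wed K v) (wpt v (M.erase v)) := by
  have hE : core v (wpt v (M.erase v)) = M.erase v := core_wpt (Finset.notMem_erase v M)
  have hEK : M.erase v ∈ K := hM.2 _ (Finset.erase_ssubset hv)
  constructor
  · intro h
    rw [mem_wed, hE] at h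
    have := h.2 inl_v_mem_wpt inr_mem_wpt
    rw [Finset.insert_erase hv] at this
    exact hM.1 this
  · intro t ht
    have hcsub : core v t ⊆ M.erase v := by
      intro x hx
      rw [mem_core] at hx
      have := ht.subset hx.2
      rw [mem_wpt_inl] at this
      rcases this with rfl | h
      · exact absurd rfl hx.1
      · exact h
    rw [mem_wed]
    refine ⟨hK _ hEK _ hcsub, fun h1 h2 => ?_⟩
    have hrep := eq_wpt_core h1 h2
    have hcss : core v t ⊂ M.erase v := by
      refine ⟨hcsub, fun hsub => ?_⟩
      have : wpt v (M.erase v) ⊆ t := by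
        rw [hrep]
        intro x hx
        rcases x with x | u
        · rw [mem_wpt_inl] at hx ⊢
          rcases hx with rfl | hx
          · exact Or.inl rfl
          · exact Or.inr (hsub hx)
        · cases u; exact inr_mem_wpt
      exact ht.not_subset this
    have : insert v (core v t) ⊂ M := by
      constructor
      · intro x hx
        rw [Finset.mem_insert] at hx
        rcases hx with rfl | hx
        · exact hv
        · exact (Finset.mem_erase.1 (hcss.subset hx)).2
      · intro hsub
        obtain ⟨x, hx', hx⟩ := Finset.exists_of_ssubset hcss
        rw [Finset.mem_erase] at hx'
        have := hsub hx'.2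
        rw [Finset.mem_insert] at this
        rcases this with rfl | h
        · exact hx'.1 rfl
        · exact hx h
    exact hM.2 _ this


end WedProof

/-- The wedge operation does not change the number of minimal non-faces: the minimal
non-faces of `wed_v K` are in bijection with those of `K`. -/
theorem stmt_4 {V : Type*} [Fintype V] [DecidableEq V] (K : Set (Finset V))
    (hK : IsComplex K) (hne : ∅ ∈ K) (v : V) :
    Nonempty
      ({N : Finset (V ⊕ Unit) // MinNonFace (wed K v) N} ≃ {N : Finset V // MinNonFace K N}) := by
  classical
  refine ⟨⟨
    fun N => if h : Sum.inr () ∈ N.1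
      then ⟨insert v (WedProof.core v N.1), (WedProof.case_in hK N.2 h).1⟩
      else ⟨WedProof.core v N.1, (WedProof.case_out N.2 h).1⟩,
    fun M => if h : v ∈ M.1
      then ⟨WedProof.wpt v (M.1.erase v), WedProof.in_min hK M.2 h⟩
      else ⟨M.1.image Sum.inl, WedProof.out_min hK M.2 h⟩,
    ?_, ?_⟩⟩
  · rintro ⟨N, hN⟩
    by_cases h : Sum.inr () ∈ N
    · simp only [dif_pos h]
      have hv : v ∈ insert v (WedProof.core v N) := Finset.mem_insert_self v _
      simp only [dif_pos hv]
      refine Subtype.ext ?_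
      show WedProof.wpt v ((insert v (WedProof.core v N)).erase v) = N
      rw [Finset.erase_insert (WedProof.not_mem_core v N)]
      exact (WedProof.case_in hK hN h).2.symm
    · simp only [dif_neg h]
      have hv : v ∉ WedProof.core v N := WedProof.not_mem_core v N
      simp only [dif_neg hv]
      refine Subtype.ext ?_
      show (WedProof.core v N).image Sum.inl = N
      exact (WedProof.case_out hN h).2.symm
  · rintro ⟨M, hM⟩
    by_cases h : v ∈ M
    · simp only [dif_pos h]
      have h2 : Sum.inr () ∈ WedProof.wpt v (M.erase v) := WedProof.inr_mem_wpt
      simp only [dif_pos h2]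
      refine Subtype.ext ?_
      show insert v (WedProof.core v (WedProof.wpt v (M.erase v))) = M
      rw [WedProof.core_wpt (Finset.notMem_erase v M), Finset.insert_erase h]
    · simp only [dif_neg h]
      have h2 : Sum.inr () ∉ M.image Sum.inl := by
        rw [Finset.mem_image]
        rintro ⟨y, -, hxy⟩
        exact Sum.inl_ne_inr hxy
      simp only [dif_neg h2]
      refine Subtype.ext ?_
      show WedProof.core v (M.image Sum.inl) = M
      exact WedProof.core_image h
end

section
/- Let K be a pure (n−1)-dimensional star-shaped simplicial sphere on [m]. Then K admits a Z₂-characteristic map λ : [m] → Z₂ⁿ (facets map to linearly independent sets) if and only if there exists a map φ : [m] → Z₂^{m−n} such that for every facet σ of K, the set {φ(i) : i ∈ [m]∖σ} is a basis of Z₂^{m−n}. -/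
open Submodule Module

set_option maxHeartbeats 1000000


noncomputable def Tmap {m r : ℕ} (v : Fin m → Fin r → ZMod 2) :
    (Fin m → ZMod 2) →ₗ[ZMod 2] (Fin r → ZMod 2) where
  toFun x := ∑ i, x i • v i
  map_add' x y := by simp [add_smul, Finset.sum_add_distrib]
  map_smul' c x := by simp [smul_smul, Finset.smul_sum]

lemma Tmap_single {m r : ℕ} (v : Fin m → Fin r → ZMod 2) (i : Fin m) :
    Tmap v (Pi.single i 1) = v i := by
  simp [Tmap, Pi.single_apply, ite_smul]

lemma key_s7 {m r k : ℕ} (hk : r + k = m) (v : Fin m → Fin r → ZMod 2)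
    (H : span (ZMod 2) (Set.range v) = ⊤) :
    ∃ w : Fin m → Fin k → ZMod 2,
      ∀ (p : Fin m → Prop) [DecidablePred p],
        Nat.card {x // p x} = r →
        LinearIndependent (ZMod 2) (fun i : {x // p x} => v i) →
        span (ZMod 2) (Set.range fun i : {x // p x} => v i) = ⊤ →
        LinearIndependent (ZMod 2) (fun i : {x // ¬ p x} => w i) ∧
        span (ZMod 2) (Set.range fun i : {x // ¬ p x} => w i) = ⊤ := by
  classical
  have hrange : LinearMap.range (Tmap v) = ⊤ := by
    rw [← top_le_iff, ← H, span_le]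
    rintro _ ⟨i, rfl⟩
    exact ⟨Pi.single i 1, Tmap_single v i⟩
  have hker : finrank (ZMod 2) (LinearMap.ker (Tmap v)) = k := by
    have h1 := LinearMap.finrank_range_add_finrank_ker (Tmap v)
    rw [hrange, finrank_top] at h1
    simp only [Module.finrank_pi, Fintype.card_fin] at h1
    omega
  obtain ⟨E⟩ : Nonempty ((Fin k → ZMod 2) ≃ₗ[ZMod 2] LinearMap.ker (Tmap v)) :=
    ⟨LinearEquiv.ofFinrankEq _ _ (by simp [hker])⟩
  refine ⟨fun i j => (E (Pi.single j 1) : Fin m → ZMod 2) i, ?_⟩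
  intro p _ hcard hind hsp
  have hcard' : Fintype.card {x // ¬ p x} = k := by
    rw [Nat.card_eq_fintype_card] at hcard
    rw [Fintype.card_subtype_compl, hcard, Fintype.card_fin]; omega
  have hindep : LinearIndependent (ZMod 2)
      (fun i : {x // ¬ p x} => (fun j => (E (Pi.single j 1) : Fin m → ZMod 2) i.1)) := by
    rw [Fintype.linearIndependent_iff]
    intro c hc i0
    set F0 : (Fin m → ZMod 2) →ₗ[ZMod 2] ZMod 2 :=
      ∑ i : {x // ¬ p x}, c i • LinearMap.proj i.1 with hF0
    have hg1 : ∀ j, F0 ((E (Pi.single j 1) : Fin m → ZMod 2)) = 0 := by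
      intro j
      have := congrFun hc j
      simpa [hF0, LinearMap.sum_apply, LinearMap.smul_apply, LinearMap.proj_apply,
        smul_eq_mul, Finset.sum_apply, Pi.smul_apply] using this
    have hg : (F0.comp (LinearMap.ker (Tmap v)).subtype).comp (E : (Fin k → ZMod 2) →ₗ[ZMod 2] LinearMap.ker (Tmap v)) = 0 := by
      apply LinearMap.pi_ext
      intro j x
      have hx : (Pi.single j x : Fin k → ZMod 2) = x • Pi.single j 1 := by
        rw [← Pi.single_smul, smul_eq_mul, mul_one]
      simp [hx, map_smul, hg1 j]
    have hall : ∀ y : LinearMap.ker (Tmap v), F0 y.1 = 0 := by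
      intro y
      have h1 : ((F0.comp (LinearMap.ker (Tmap v)).subtype).comp
          (E : (Fin k → ZMod 2) →ₗ[ZMod 2] LinearMap.ker (Tmap v))) (E.symm y) = 0 := by
        rw [hg]; rfl
      simpa [LinearMap.comp_apply, E.apply_symm_apply] using h1
    obtain ⟨a, hav⟩ : ∃ a : {x // p x} → ZMod 2, ∑ j, a j • v j.1 = v i0.1 := by
      have : v i0.1 ∈ span (ZMod 2) (Set.range fun i : {x // p x} => v i) := by
        rw [hsp]; trivial
      exact (mem_span_range_iff_exists_fun _).1 this
    set z : Fin m → ZMod 2 :=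
      fun i => if h : p i then a ⟨i, h⟩ else if i = i0.1 then 1 else 0 with hz
    have hzker : z ∈ LinearMap.ker (Tmap v) := by
      rw [LinearMap.mem_ker]
      show ∑ i, z i • v i = 0
      rw [← Finset.sum_filter_add_sum_filter_not Finset.univ p]
      have h1 : ∑ i ∈ Finset.univ.filter p, z i • v i = v i0.1 := by
        rw [Finset.sum_subtype (p := p) (Finset.univ.filter p) (fun i => by simp) (fun i => z i • v i)]
        rw [← hav]
        refine Finset.sum_congr rfl fun j _ => ?_
        simp [hz, j.2]
      have h2 : ∑ i ∈ Finset.univ.filter (fun i => ¬ p i), z i • v i = v i0.1 := by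
        have he : ∀ i ∈ Finset.univ.filter (fun i => ¬ p i),
            z i • v i = if i = i0.1 then v i else 0 := by
          intro i hi
          simp only [Finset.mem_filter] at hi
          simp [hz, hi.2, ite_smul]
        rw [Finset.sum_congr rfl he, Finset.sum_ite_eq' _ i0.1]
        simp [i0.2]
      rw [h1, h2]
      funext j
      exact CharTwo.add_self_eq_zero _
    have hc0 := hall ⟨z, hzker⟩
    have hF0z : F0 z = c i0 := by
      simp only [hF0, LinearMap.sum_apply, LinearMap.smul_apply, LinearMap.proj_apply,
        smul_eq_mul]
      have he : ∀ i : {x // ¬ p x}, c i * z i.1 = if i = i0 then c i else 0 := by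
        intro i
        simp only [hz, dif_neg i.2]
        by_cases h : i = i0
        · subst h; simp
        · have : i.1 ≠ i0.1 := fun hh => h (Subtype.ext hh)
          simp [this, h]
      rw [Finset.sum_congr rfl (fun i _ => he i), Finset.sum_ite_eq' _ i0]
      simp
    rw [hF0z] at hc0
    exact hc0
  refine ⟨hindep, hindep.span_eq_top_of_card_eq_finrank' ?_⟩
  simp [hcard']




lemma li_congr {α : Type*} {W : Type*} [AddCommGroup W] [Module (ZMod 2) W] {p q : α → Prop}
    (h : ∀ x, p x ↔ q x) {w : α → W}
    (hli : LinearIndependent (ZMod 2) (fun i : {x // p x} => w i)) :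
    LinearIndependent (ZMod 2) (fun i : {x // q x} => w i) := by
  exact (linearIndependent_equiv (Equiv.subtypeEquivRight fun x => (h x).symm)
    (f := fun i : {x // p x} => w i)).2 hli

lemma range_congr {α : Type*} {W : Type*} {p q : α → Prop} (h : ∀ x, p x ↔ q x) (w : α → W) :
    Set.range (fun i : {x // p x} => w i) = Set.range (fun i : {x // q x} => w i) := by
  ext y
  constructor
  · rintro ⟨⟨x, hx⟩, rfl⟩; exact ⟨⟨x, (h x).1 hx⟩, rfl⟩
  · rintro ⟨⟨x, hx⟩, rfl⟩; exact ⟨⟨x, (h x).2 hx⟩, rfl⟩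



/-- The cone spanned by the rays `f w`, `w ∈ σ`, in `ℝⁿ`. -/
def coneOf {V : Type*} {n : ℕ} (f : V → Fin n → ℝ) (σ : Finset V) : Set (Fin n → ℝ) :=
  {x | ∃ c : V → ℝ, (∀ w, 0 ≤ c w) ∧ x = ∑ w ∈ σ, c w • f w}

/-- `K` is a star-shaped simplicial sphere of dimension `n - 1`: a pure simplicial complex
whose faces are realized as the cones of a complete simplicial fan in `ℝⁿ`. -/
def IsStarShapedSphere {V : Type*} [DecidableEq V] (K : Set (Finset V)) (n : ℕ) : Prop :=
  IsComplex K ∧ ∅ ∈ K ∧ (∀ w : V, ({w} : Finset V) ∈ K) ∧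
  (∀ s, IsFacet K s → s.card = n) ∧
  ∃ f : V → Fin n → ℝ,
    (∀ σ ∈ K, LinearIndependent ℝ fun w : {x : V // x ∈ σ} => f w.val) ∧
    (∀ x : Fin n → ℝ, ∃ σ ∈ K, x ∈ coneOf f σ) ∧
    (∀ σ ∈ K, ∀ τ ∈ K, coneOf f σ ∩ coneOf f τ = coneOf f (σ ∩ τ))

/-- Buchstaber–Panov criterion over `ℤ₂`: `K` admits a `ℤ₂`-characteristic map iff there is
a dual map `φ : [m] → ℤ₂^{m-n}` sending each facet complement to a basis. -/
theorem stmt_7 (m n : ℕ) (hnm : n ≤ m) (K : Set (Finset (Fin m)))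
    (hS : IsStarShapedSphere K n) :
    (∃ lam : Fin m → Fin n → ZMod 2, ∀ s, IsFacet K s →
        LinearIndependent (ZMod 2) fun i : {x : Fin m // x ∈ s} => lam i.val) ↔
    (∃ φ : Fin m → Fin (m - n) → ZMod 2, ∀ s, IsFacet K s →
        (LinearIndependent (ZMod 2) fun i : {x : Fin m // x ∉ s} => φ i.val) ∧
        Submodule.span (ZMod 2) (Set.range fun i : {x : Fin m // x ∉ s} => φ i.val) = ⊤) := by
  classical
  have hpure : ∀ s, IsFacet K s → s.card = n := hS.2.2.2.1
  by_cases hfac : ∃ s, IsFacet K s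
  · obtain ⟨s0, hs0⟩ := hfac
    have hcards : ∀ s, IsFacet K s → Nat.card {x : Fin m // x ∈ s} = n := by
      intro s hs
      simp [Nat.card_eq_fintype_card, hpure s hs]
    have hcardc : ∀ s, IsFacet K s → Nat.card {x : Fin m // x ∉ s} = m - n := by
      intro s hs
      rw [Nat.card_eq_fintype_card, Fintype.card_subtype_compl, Fintype.card_fin]
      have := hcards s hs
      rw [Nat.card_eq_fintype_card] at this
      simp only [this]
    constructor
    · rintro ⟨lam, hlam⟩
      have hspan : ∀ s, IsFacet K s →
          span (ZMod 2) (Set.range fun i : {x : Fin m // x ∈ s} => lam i) = ⊤ := by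
        intro s hs
        exact (hlam s hs).span_eq_top_of_card_eq_finrank' (by rw [← Nat.card_eq_fintype_card, hcards s hs]; simp)
      have H : span (ZMod 2) (Set.range lam) = ⊤ := by
        rw [← top_le_iff, ← hspan s0 hs0]
        exact span_mono (by rintro _ ⟨i, rfl⟩; exact ⟨i.1, rfl⟩)
      obtain ⟨w, hw⟩ := key_s7 (show n + (m - n) = m by omega) lam H
      refine ⟨w, fun s hs => ?_⟩
      exact hw (fun x => x ∈ s) (hcards s hs) (hlam s hs) (hspan s hs)
    · rintro ⟨φ, hφ⟩
      have H : span (ZMod 2) (Set.range φ) = ⊤ := by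
        rw [← top_le_iff, ← (hφ s0 hs0).2]
        exact span_mono (by rintro _ ⟨i, rfl⟩; exact ⟨i.1, rfl⟩)
      obtain ⟨w, hw⟩ := key_s7 (show (m - n) + n = m by omega) φ H
      refine ⟨w, fun s hs => ?_⟩
      have := hw (fun x => x ∉ s) (hcardc s hs) (hφ s hs).1 (hφ s hs).2
      exact li_congr (fun x => not_not) this.1
  · constructor
    · intro _; exact ⟨0, fun s hs => absurd ⟨s, hs⟩ hfac⟩
    · intro _; exact ⟨0, fun s hs => absurd ⟨s, hs⟩ hfac⟩
end

section
/- Fix ℓ ≥ 1. If K is a seed star-shaped simplicial sphere of dimension n−1 on m vertices with Picard number ℓ = m − n that admits a Z₂-characteristic map, then m ≤ 2^ℓ − 1. -/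
/-- `K` is a seed: it is not isomorphic to any simplicial wedge. -/
def IsSeed {V : Type*} [DecidableEq V] (K : Set (Finset V)) : Prop :=
  ¬ ∃ (W : Type) (_ : DecidableEq W) (L : Set (Finset W)) (u : W) (e : V ≃ (W ⊕ Unit)),
      ∀ s : Finset V, s ∈ K ↔ s.image e ∈ wed L u

section AuxLemmas
lemma exists_facet_s8 {m : ℕ} {K : Set (Finset (Fin m))} {σ : Finset (Fin m)}
    (hσ : σ ∈ K) : ∃ F, IsFacet K F ∧ σ ⊆ F := by
  have hfin : {t ∈ K | σ ⊆ t}.Finite := Set.toFinite _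
  obtain ⟨F, hF, hmax⟩ := Set.Finite.exists_maximalFor (fun t => t.card) _ hfin
    ⟨σ, hσ, subset_rfl⟩
  refine ⟨F, ⟨hF.1, fun t ht hFt => ?_⟩, hF.2⟩
  have := hmax ⟨ht, hF.2.trans hFt⟩ (Finset.card_le_card hFt)
  exact (Finset.eq_of_subset_of_card_le hFt this).symm


lemma coeff_unique {m n : ℕ} {f : Fin m → Fin n → ℝ} {σ : Finset (Fin m)}
    (hli : LinearIndependent ℝ fun w : {x : Fin m // x ∈ σ} => f w.val)
    {c c' : Fin m → ℝ}
    (h : ∑ w ∈ σ, c w • f w = ∑ w ∈ σ, c' w • f w) :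
    ∀ j ∈ σ, c j = c' j := by
  intro j hj
  have h0 : ∑ i : {x : Fin m // x ∈ σ}, (c i.val - c' i.val) • f i.val = 0 := by
    rw [Finset.sum_coe_sort σ (fun w => (c w - c' w) • f w)]
    simp only [sub_smul, Finset.sum_sub_distrib, h, sub_self]
  have := (Fintype.linearIndependent_iff.mp hli) _ h0 ⟨j, hj⟩
  linarith [this]

-- representation over a spanning facet, with support control
lemma span_lam {m n : ℕ} {lam : Fin m → Fin n → ZMod 2} {F : Finset (Fin m)}
    (hcard : F.card = n) (hne : F.Nonempty)
    (hli : LinearIndependent (ZMod 2) fun i : {x : Fin m // x ∈ F} => lam i.val)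
    (y : Fin n → ZMod 2) :
    ∃ a : Fin m → ZMod 2, (∀ j, j ∉ F → a j = 0) ∧ y = ∑ j ∈ F, a j • lam j := by
  have hcard' : Fintype.card {x : Fin m // x ∈ F} = Module.finrank (ZMod 2) (Fin n → ZMod 2) := by
    simp [Module.finrank_pi, hcard]
  have : Nonempty {x : Fin m // x ∈ F} := by
    obtain ⟨x, hx⟩ := hne; exact ⟨⟨x, hx⟩⟩
  have hsp := hli.span_eq_top_of_card_eq_finrank hcard'
  have hy : y ∈ Submodule.span (ZMod 2)
      (Set.range fun i : {x : Fin m // x ∈ F} => lam i.val) := hsp ▸ Submodule.mem_top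
  obtain ⟨c, hc⟩ := (Submodule.mem_span_range_iff_exists_fun (ZMod 2)).mp hy
  refine ⟨fun j => if h : j ∈ F then c ⟨j, h⟩ else 0, fun j hj => dif_neg hj, ?_⟩
  rw [← hc, ← Finset.sum_coe_sort F (fun j => (if h : j ∈ F then c ⟨j, h⟩ else 0) • lam j)]
  exact Finset.sum_congr rfl fun i _ => by rw [dif_pos i.2]

-- kernel vector with prescribed support
lemma ker_vec {m n : ℕ} {lam : Fin m → Fin n → ZMod 2} {F : Finset (Fin m)}
    (hcard : F.card = n) (hne : F.Nonempty)
    (hli : LinearIndependent (ZMod 2) fun i : {x : Fin m // x ∈ F} => lam i.val)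
    {i : Fin m} (hi : i ∉ F) :
    ∃ x : Fin m → ZMod 2, (∑ j, x j • lam j = 0) ∧ x i = 1 ∧
      (∀ j, x j ≠ 0 → j = i ∨ j ∈ F) := by
  obtain ⟨a, ha0, ha⟩ := span_lam hcard hne hli (lam i)
  refine ⟨fun j => (if j = i then 1 else 0) + a j, ?_, ?_, ?_⟩
  · have : ∑ j, ((if j = i then (1 : ZMod 2) else 0) + a j) • lam j
        = (∑ j, (if j = i then (1 : ZMod 2) else 0) • lam j) + ∑ j, a j • lam j := by
      simp [add_smul, Finset.sum_add_distrib]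
    rw [this]
    have h1 : ∑ j, (if j = i then (1 : ZMod 2) else 0) • lam j = lam i := by
      simp [ite_smul]
    have h2 : ∑ j, a j • lam j = lam i := by
      rw [← Finset.sum_subset (Finset.subset_univ F) (fun x _ hx => by rw [ha0 x hx, zero_smul])]
      exact ha.symm
    rw [h1, h2]
    ext k
    simp [CharTwo.add_self_eq_zero]
  · simp [ha0 i hi]
  · intro j hj
    by_cases h : j = i
    · exact Or.inl h
    · right; by_contra hF
      exact hj (by simp [h, ha0 j hF])

lemma gale {m n ℓ : ℕ} (hpic : m = n + ℓ) (hm : 2 ^ ℓ ≤ m)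
    (φ : (Fin m → ZMod 2) →ₗ[ZMod 2] (Fin n → ZMod 2))
    (hsurj : LinearMap.range φ = ⊤) :
    (∃ v w : Fin m, v ≠ w ∧ ∀ x ∈ LinearMap.ker φ, x v = x w) ∨
      (∃ i : Fin m, ∀ x ∈ LinearMap.ker φ, x i = 0) := by
  classical
  have hrk : Module.finrank (ZMod 2) (LinearMap.ker φ) = ℓ := by
    have h1 := LinearMap.finrank_range_add_finrank_ker φ
    rw [hsurj] at h1
    simp only [finrank_top, Module.finrank_pi, Fintype.card_fin] at h1
    omega
  let b : Module.Basis (Fin ℓ) (ZMod 2) (LinearMap.ker φ) :=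
    (Module.finBasis (ZMod 2) (LinearMap.ker φ)).reindex (finCongr hrk)
  let ev : Option (Fin m) → ((Fin m → ZMod 2) →ₗ[ZMod 2] ZMod 2) :=
    fun o => o.elim 0 (fun i => LinearMap.proj i)
  let G : Option (Fin m) → (Fin ℓ → ZMod 2) := fun o k => ev o (b k)
  have hcard : Fintype.card (Fin ℓ → ZMod 2) < Fintype.card (Option (Fin m)) := by
    simp only [Fintype.card_fun, Fintype.card_fin, ZMod.card]
    simpa using Nat.lt_succ_of_le hm
  obtain ⟨o₁, o₂, hne, hG⟩ := Fintype.exists_ne_map_eq_of_card_lt G hcard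
  have key : ∀ x ∈ LinearMap.ker φ, ev o₁ x = ev o₂ x := by
    intro x hx
    have : (ev o₁).comp (LinearMap.ker φ).subtype = (ev o₂).comp (LinearMap.ker φ).subtype := by
      apply b.ext
      intro k
      simpa using congrFun hG k
    have := congrArg (fun ψ => ψ (⟨x, hx⟩ : LinearMap.ker φ)) this
    simpa using this
  match o₁, o₂ with
  | some v, some w =>
    exact Or.inl ⟨v, w, fun h => hne (by rw [h]), fun x hx => key x hx⟩
  | some v, none => exact Or.inr ⟨v, fun x hx => key x hx⟩
  | none, some w => exact Or.inr ⟨w, fun x hx => (key x hx).symm⟩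
  | none, none => exact absurd rfl hne

lemma pseudo {m n : ℕ} {K : Set (Finset (Fin m))} {f : Fin m → Fin n → ℝ}
    (hli : ∀ σ ∈ K, LinearIndependent ℝ fun w : {x : Fin m // x ∈ σ} => f w.val)
    (hcomplete : ∀ x : Fin n → ℝ, ∃ σ ∈ K, x ∈ coneOf f σ)
    (hint : ∀ σ ∈ K, ∀ τ ∈ K, coneOf f σ ∩ coneOf f τ = coneOf f (σ ∩ τ))
    {F : Finset (Fin m)} (hF : IsFacet K F) {w : Fin m} (hw : w ∈ F) :
    ∃ F', IsFacet K F' ∧ F.erase w ⊆ F' ∧ w ∉ F' := by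
  classical
  set R := F.erase w with hR
  have hRF : R ⊆ F := Finset.erase_subset _ _
  set x₀ : Fin n → ℝ := ∑ j ∈ R, f j with hx₀
  set ε : ℕ → ℝ := fun t => 1 / (t + 1) with hε
  have hεpos : ∀ t, 0 < ε t := fun t => by positivity
  have hεmono : ∀ s t : ℕ, s < t → ε t < ε s := by
    intro s t hst
    apply one_div_lt_one_div_of_lt (by positivity)
    have : (s : ℝ) < t := by exact_mod_cast hst
    linarith
  -- choose cones containing x₀ - ε t • f w
  have hch : ∀ t : ℕ, ∃ σ, σ ∈ K ∧ (x₀ - ε t • f w) ∈ coneOf f σ := by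
    intro t
    obtain ⟨σ, h1, h2⟩ := hcomplete (x₀ - ε t • f w)
    exact ⟨σ, h1, h2⟩
  choose σ hσK hσc using hch
  obtain ⟨S, hSinf'⟩ := Finite.exists_infinite_fiber σ
  have hSinf : (σ ⁻¹' {S}).Infinite := Set.infinite_coe_iff.mp hSinf'
  obtain ⟨t₁, ht₁⟩ := hSinf.nonempty
  obtain ⟨t₂, ht₂, ht₁₂⟩ := hSinf.exists_gt t₁
  have hSK : S ∈ K := by have := hσK t₁; rwa [ht₁] at this
  have hrep : ∀ t, σ t = S → ∃ c : Fin m → ℝ, (∀ j, 0 ≤ c j) ∧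
      x₀ - ε t • f w = ∑ j ∈ S, c j • f j := by
    intro t ht
    have := hσc t; rw [ht] at this; exact this
  obtain ⟨c₁, hc₁0, hc₁⟩ := hrep t₁ ht₁
  obtain ⟨c₂, hc₂0, hc₂⟩ := hrep t₂ ht₂
  have hεne : ε t₂ - ε t₁ ≠ 0 := by have := hεmono t₁ t₂ ht₁₂; linarith
  set d : Fin m → ℝ := fun j => (ε t₂ - ε t₁)⁻¹ * (c₁ j - c₂ j) with hd
  have hdsum : ∑ j ∈ S, d j • f j = f w := by
    have h1 : ∑ j ∈ S, (c₁ j - c₂ j) • f j = (ε t₂ - ε t₁) • f w := by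
      simp only [sub_smul, Finset.sum_sub_distrib, ← hc₁, ← hc₂]
      module
    calc ∑ j ∈ S, d j • f j = (ε t₂ - ε t₁)⁻¹ • ∑ j ∈ S, (c₁ j - c₂ j) • f j := by
          rw [Finset.smul_sum]; exact Finset.sum_congr rfl fun j _ => by
            rw [hd]; rw [smul_smul]
      _ = f w := by rw [h1, smul_smul, inv_mul_cancel₀ hεne, one_smul]
  set a : Fin m → ℝ := fun j => c₁ j + ε t₁ * d j with ha
  have hasum : ∑ j ∈ S, a j • f j = x₀ := by
    have : ∑ j ∈ S, a j • f j = (∑ j ∈ S, c₁ j • f j) + ε t₁ • ∑ j ∈ S, d j • f j := by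
      rw [Finset.smul_sum]
      rw [← Finset.sum_add_distrib]
      exact Finset.sum_congr rfl fun j _ => by rw [ha]; simp [add_smul, smul_smul]
    rw [this, hdsum, ← hc₁]
    module
  -- coefficients at parameter t equal a - ε t * d on S
  have hct : ∀ t, σ t = S → ∀ c : Fin m → ℝ,
      (x₀ - ε t • f w = ∑ j ∈ S, c j • f j) → ∀ j ∈ S, c j = a j - ε t * d j := by
    intro t ht c hc
    have heq : ∑ j ∈ S, c j • f j = ∑ j ∈ S, (fun j => a j - ε t * d j) j • f j := by
      have : ∑ j ∈ S, (fun j => a j - ε t * d j) j • f j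
          = (∑ j ∈ S, a j • f j) - ε t • ∑ j ∈ S, d j • f j := by
        rw [Finset.smul_sum, ← Finset.sum_sub_distrib]
        exact Finset.sum_congr rfl fun j _ => by simp [sub_smul, smul_smul]
      rw [this, hasum, hdsum, ← hc]
    exact coeff_unique (hli S hSK) heq
  -- a is nonnegative on S
  have haS : ∀ j ∈ S, 0 ≤ a j := by
    intro j hj
    refine le_of_forall_pos_le_add fun δ hδ => ?_
    obtain ⟨N, hN⟩ := exists_nat_gt (|d j| / δ)
    obtain ⟨t, ht, hNt⟩ := hSinf.exists_gt N
    obtain ⟨c, hc0, hc⟩ := hrep t ht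
    have hcj := hct t ht c hc j hj
    have h1 : ε t * |d j| ≤ δ := by
      rw [hε]
      rw [div_mul_eq_mul_div, div_le_iff₀ (by positivity)]
      have h2 : |d j| / δ < N := hN
      have h3 : |d j| < N * δ := by
        rw [div_lt_iff₀ hδ] at h2; linarith
      have h4 : (N : ℝ) ≤ t := by exact_mod_cast le_of_lt hNt
      nlinarith
    have h5 : -(ε t * d j) ≤ ε t * |d j| := by
      rw [← mul_neg]
      exact mul_le_mul_of_nonneg_left (neg_le_abs _) (le_of_lt (hεpos t))
    have h6 : 0 ≤ a j - ε t * d j := hcj ▸ hc0 j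
    linarith
  -- x₀ ∈ coneOf f S
  have hx₀S : x₀ ∈ coneOf f S := by
    refine ⟨fun j => if j ∈ S then a j else 0, fun j => ?_, ?_⟩
    · by_cases h : j ∈ S
      · simp only [if_pos h]; exact haS j h
      · simp [h]
    · rw [← hasum]
      exact (Finset.sum_congr rfl fun j hj => by dsimp only; rw [if_pos hj]).symm
  -- x₀ ∈ coneOf f F
  have hx₀F : x₀ ∈ coneOf f F := by
    refine ⟨fun j => if j ∈ R then 1 else 0, fun j => by dsimp only; split <;> norm_num, ?_⟩
    beta_reduce
    rw [hx₀, ← Finset.sum_subset hRF (fun j _ hj => by rw [if_neg hj, zero_smul])]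
    exact Finset.sum_congr rfl fun j hj => by rw [if_pos hj, one_smul]
  -- R ⊆ S
  have hRS : R ⊆ S := by
    have hmem : x₀ ∈ coneOf f (S ∩ F) := by
      rw [← hint S hSK F hF.1]; exact ⟨hx₀S, hx₀F⟩
    obtain ⟨e, he0, he⟩ := hmem
    have heF : ∑ j ∈ F, (fun j => if j ∈ S ∩ F then e j else 0) j • f j
        = ∑ j ∈ F, (fun j => if j ∈ R then (1:ℝ) else 0) j • f j := by
      rw [← Finset.sum_subset (Finset.inter_subset_right : S ∩ F ⊆ F)
        (fun j _ hj => by simp only [if_neg hj, zero_smul])]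
      have h1 : ∑ j ∈ S ∩ F, (if j ∈ S ∩ F then e j else 0) • f j = ∑ j ∈ S ∩ F, e j • f j :=
        Finset.sum_congr rfl fun j hj => by rw [if_pos hj]
      have h2 : ∑ j ∈ F, (if j ∈ R then (1:ℝ) else 0) • f j = ∑ j ∈ R, f j := by
        rw [← Finset.sum_subset hRF (fun j _ hj => by rw [if_neg hj, zero_smul])]
        exact Finset.sum_congr rfl fun j hj => by rw [if_pos hj, one_smul]
      rw [h1, h2, ← he, hx₀]
    have := coeff_unique (hli F hF.1) heF
    intro j hj
    have hjF := hRF hj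
    have := this j hjF
    simp only [if_pos hj] at this
    by_contra hjS
    rw [if_neg (fun h => hjS (Finset.mem_inter.mp h).1)] at this
    norm_num at this
  -- the representation of x₀ - ε t₁ • f w over F has coefficient -ε t₁ at w
  have hrepF : x₀ - ε t₁ • f w = ∑ j ∈ F,
      (fun j => (if j ∈ R then (1:ℝ) else 0) + (if j = w then -ε t₁ else 0)) j • f j := by
    have : ∑ j ∈ F, ((if j ∈ R then (1:ℝ) else 0) + (if j = w then -ε t₁ else 0)) • f j
        = (∑ j ∈ F, (if j ∈ R then (1:ℝ) else 0) • f j)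
          + ∑ j ∈ F, (if j = w then -ε t₁ else 0) • f j := by
      rw [← Finset.sum_add_distrib]
      exact Finset.sum_congr rfl fun j _ => by rw [add_smul]
    rw [this]
    have h2 : ∑ j ∈ F, (if j ∈ R then (1:ℝ) else 0) • f j = x₀ := by
      rw [hx₀, ← Finset.sum_subset hRF (fun j _ hj => by rw [if_neg hj, zero_smul])]
      exact Finset.sum_congr rfl fun j hj => by rw [if_pos hj, one_smul]
    have h3 : ∑ j ∈ F, (if j = w then -ε t₁ else 0) • f j = -ε t₁ • f w := by
      rw [Finset.sum_eq_single w (fun j _ hj => by rw [if_neg hj, zero_smul])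
        (fun h => absurd hw h)]
      rw [if_pos rfl]
    rw [h2, h3]
    module
  -- w ∉ S
  have hwS : w ∉ S := by
    intro hwS
    have hFS : F ⊆ S := by
      intro j hj
      by_cases h : j = w
      · rwa [h]
      · exact hRS (Finset.mem_erase.mpr ⟨h, hj⟩)
    have hSF : S = F := hF.2 S hSK hFS
    rw [hSF] at hc₁
    have hwR : w ∉ R := Finset.notMem_erase w F
    have h7 := coeff_unique (hli F hF.1) (hc₁.symm.trans hrepF) w hw
    simp [hwR] at h7
    have := hc₁0 w
    have hε1 := hεpos t₁
    linarith
  -- S ≠ R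
  have hSR : S ≠ R := by
    intro hSReq
    rw [hSReq] at hc₁
    have hc₁' : x₀ - ε t₁ • f w = ∑ j ∈ F, (fun j => if j ∈ R then c₁ j else 0) j • f j := by
      rw [hc₁, ← Finset.sum_subset hRF (fun j _ hj => by simp only [if_neg hj, zero_smul])]
      exact (Finset.sum_congr rfl fun j hj => by dsimp only; rw [if_pos hj])
    have hwR : w ∉ R := Finset.notMem_erase w F
    have h7 := coeff_unique (hli F hF.1) (hc₁'.symm.trans hrepF) w hw
    simp [hwR] at h7
    have hε1 := hεpos t₁
    linarith
  obtain ⟨F', hF', hSF'⟩ := exists_facet_s8 hSK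
  refine ⟨F', hF', hRS.trans hSF', fun hwF' => ?_⟩
  have hFF' : F ⊆ F' := by
    intro j hj
    by_cases h : j = w
    · rwa [h]
    · exact hSF' (hRS (Finset.mem_erase.mpr ⟨h, hj⟩))
  have : F' = F := hF.2 F' hF'.1 hFF'
  rw [this] at hSF'
  apply hSR
  apply Finset.Subset.antisymm _ hRS
  intro j hj
  exact Finset.mem_erase.mpr ⟨fun h => hwS (h ▸ hj), hSF' hj⟩

lemma is_wedge {m : ℕ} {K : Set (Finset (Fin m))} (hcomplex : IsComplex K)
    {v w : Fin m} (hvw : v ≠ w)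
    (hv : ∀ σ, σ ∈ K → v ∉ σ → w ∉ σ → insert v σ ∈ K)
    (hw : ∀ σ, σ ∈ K → v ∉ σ → w ∉ σ → insert w σ ∈ K) :
    ∃ (W : Type) (_ : DecidableEq W) (L : Set (Finset W)) (u : W)
      (e : Fin m ≃ (W ⊕ Unit)),
      ∀ s : Finset (Fin m), s ∈ K ↔ s.image e ∈ wed L u := by
  classical
  refine ⟨{x : Fin m // x ≠ w}, inferInstance, ?_, ⟨v, hvw⟩, ?_, ?_⟩
  · exact {τ | (⟨v, hvw⟩ ∉ τ ∧ τ.image Subtype.val ∈ K) ∨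
      (⟨v, hvw⟩ ∈ τ ∧ insert w (τ.image Subtype.val) ∈ K)}
  · exact {
      toFun := fun x => if h : x = w then Sum.inr () else Sum.inl ⟨x, h⟩
      invFun := Sum.elim (fun a => a.val) (fun _ => w)
      left_inv := fun x => by by_cases h : x = w <;> simp [h]
      right_inv := fun y => by
        rcases y with a | u
        · simp [a.2]
        · simp }
  · intro s
    set W := {x : Fin m // x ≠ w}
    set u : W := ⟨v, hvw⟩
    set e : Fin m ≃ (W ⊕ Unit) := {
      toFun := fun x => if h : x = w then Sum.inr () else Sum.inl ⟨x, h⟩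
      invFun := Sum.elim (fun a => a.val) (fun _ => w)
      left_inv := fun x => by by_cases h : x = w <;> simp [h]
      right_inv := fun y => by
        rcases y with a | u
        · simp [a.2]
        · simp } with he
    set L : Set (Finset W) := {τ | (u ∉ τ ∧ τ.image Subtype.val ∈ K) ∨
      (u ∈ τ ∧ insert w (τ.image Subtype.val) ∈ K)} with hL
    have hew : e w = Sum.inr () := by simp [he]
    have hev : e v = Sum.inl u := by simp [he, hvw]; rfl
    have hex : ∀ (x : Fin m) (h : x ≠ w), e x = Sum.inl ⟨x, h⟩ := fun x h => by simp [he, h]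
    have hmemim : ∀ (s : Finset (Fin m)) (y : W ⊕ Unit), y ∈ s.image e ↔ e.symm y ∈ s := by
      intro s y
      rw [Finset.mem_image]
      constructor
      · rintro ⟨x, hx, rfl⟩; simpa using hx
      · intro h; exact ⟨e.symm y, h, e.apply_symm_apply y⟩
    constructor
    · -- forward
      intro hs
      set T : Finset (Fin m) := (s.erase v).erase w with hT
      have hTs : T ⊆ s := (Finset.erase_subset _ _).trans (Finset.erase_subset _ _)
      have hTK : T ∈ K := hcomplex s hs T hTs
      have hvT : v ∉ T := fun h => Finset.notMem_erase v s (Finset.mem_of_mem_erase h)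
      have hwT : w ∉ T := Finset.notMem_erase w _
      set τ : Finset W := T.subtype (· ≠ w) with hτ
      have himval : τ.image Subtype.val = T := by
        ext x
        constructor
        · rintro hx
          obtain ⟨b, hb, rfl⟩ := Finset.mem_image.mp hx
          exact Finset.mem_subtype.mp hb
        · intro hx
          exact Finset.mem_image.mpr ⟨⟨x, fun hxw => hwT (hxw ▸ hx)⟩,
            Finset.mem_subtype.mpr hx, rfl⟩
      have huτ : u ∉ τ := fun h => hvT (Finset.mem_subtype.mp h)
      have hτL : τ ∈ L := Or.inl ⟨huτ, himval ▸ hTK⟩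
      set a : Finset (W ⊕ Unit) :=
        (s.image e) ∩ ({Sum.inl u, Sum.inr ()} : Finset (W ⊕ Unit)) with haa
      refine ⟨a, Finset.inter_subset_right, τ, huτ, hτL, ?_, ?_⟩
      · -- s.image e = a ∪ τ.image Sum.inl
        ext y
        constructor
        · intro hy
          rcases y with b | y0
          · by_cases hb : b = u
            · exact Finset.mem_union_left _ (Finset.mem_inter.mpr ⟨hy,
                by simp [hb]⟩)
            · refine Finset.mem_union_right _ (Finset.mem_image.mpr ⟨b, ?_, rfl⟩)
              have hbv : b.val ≠ v := fun hc => hb (Subtype.ext hc)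
              have hbs : b.val ∈ s := by
                have := (hmemim s (Sum.inl b)).mp hy
                simpa [he] using this
              refine Finset.mem_subtype.mpr (Finset.mem_erase.mpr ⟨b.2,
                Finset.mem_erase.mpr ⟨hbv, hbs⟩⟩)
          · exact Finset.mem_union_left _ (Finset.mem_inter.mpr ⟨hy, by simp⟩)
        · intro hy
          rcases Finset.mem_union.mp hy with hy | hy
          · exact (Finset.mem_inter.mp hy).1
          · obtain ⟨b, hb, rfl⟩ := Finset.mem_image.mp hy
            have hbT : b.val ∈ T := Finset.mem_subtype.mp hb
            refine (hmemim s (Sum.inl b)).mpr ?_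
            simpa [he] using hTs hbT
      · -- insert u τ ∈ L ∨ a.card ≤ 1
        by_cases hvs : v ∈ s
        · by_cases hws : w ∈ s
          · left
            refine Or.inr ⟨Finset.mem_insert_self _ _, ?_⟩
            rw [Finset.image_insert, himval]
            have : insert w (insert (u : W).val T) = s := by
              ext x
              simp only [Finset.mem_insert, hT, Finset.mem_erase]
              constructor
              · rintro (rfl | rfl | h)
                · exact hws
                · exact hvs
                · exact h.2.2
              · intro hx
                by_cases h1 : x = w
                · exact Or.inl h1
                · by_cases h2 : x = v
                  · exact Or.inr (Or.inl h2)
                  · exact Or.inr (Or.inr ⟨h1, h2, hx⟩)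
            rw [this]
            exact hs
          · right
            have : a ⊆ {Sum.inl u} := by
              intro y hy
              obtain ⟨hy1, hy2⟩ := Finset.mem_inter.mp hy
              rcases Finset.mem_insert.mp hy2 with rfl | hy3
              · exact Finset.mem_singleton_self _
              · exfalso
                rw [Finset.mem_singleton] at hy3
                subst hy3
                have := (hmemim s (Sum.inr ())).mp hy1
                simp [he] at this
                exact hws this
            simpa using Finset.card_le_card this
        · right
          have : a ⊆ {Sum.inr ()} := by
            intro y hy
            obtain ⟨hy1, hy2⟩ := Finset.mem_inter.mp hy
            rcases Finset.mem_insert.mp hy2 with rfl | hy3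
            · exfalso
              have := (hmemim s (Sum.inl u)).mp hy1
              simp [he] at this
              exact hvs this
            · exact hy3
          simpa using Finset.card_le_card this
    · -- backward
      rintro ⟨a, haSub, τ, huτ, hτL, heq, hlast⟩
      have hTK : τ.image Subtype.val ∈ K := by
        rcases hτL with ⟨_, h⟩ | ⟨h, _⟩
        · exact h
        · exact absurd h huτ
      set T : Finset (Fin m) := τ.image Subtype.val with hT
      have hvT : v ∉ T := by
        intro h
        obtain ⟨b, hb, hbv⟩ := Finset.mem_image.mp h
        exact huτ ((Subtype.ext hbv : b = u) ▸ hb)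
      have hwT : w ∉ T := by
        intro h
        obtain ⟨b, hb, hbv⟩ := Finset.mem_image.mp h
        exact b.2 hbv
      have hxmem : ∀ x : Fin m, x ≠ v → x ≠ w → (x ∈ s ↔ x ∈ T) := by
        intro x hxv hxw
        have h1 : x ∈ s ↔ e x ∈ s.image e := by
          constructor
          · exact fun h => Finset.mem_image_of_mem _ h
          · intro h; have := (hmemim s (e x)).mp h; simpa using this
        rw [h1, heq, Finset.mem_union]
        rw [hex x hxw]
        constructor
        · rintro (h | h)
          · exfalso
            have := haSub h
            rcases Finset.mem_insert.mp this with h2 | h2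
            · exact hxv (congrArg (fun q => Sum.elim (fun (b : W) => b.val) (fun _ => w) q) h2)
            · simp at h2
          · obtain ⟨b, hb, hbe⟩ := Finset.mem_image.mp h
            have : b = ⟨x, hxw⟩ := Sum.inl.inj hbe
            rw [hT]
            exact Finset.mem_image.mpr ⟨b, hb, by rw [this]⟩
        · intro h
          right
          obtain ⟨b, hb, hbv⟩ := Finset.mem_image.mp h
          have : b = ⟨x, hxw⟩ := Subtype.ext hbv
          exact Finset.mem_image.mpr ⟨b, hb, by rw [this]⟩
      have hvs : v ∈ s ↔ Sum.inl u ∈ a := by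
        have h1 : v ∈ s ↔ Sum.inl u ∈ s.image e := by
          constructor
          · intro h; exact hev ▸ Finset.mem_image_of_mem _ h
          · intro h; have := (hmemim s (Sum.inl u)).mp h; simpa [he] using this
        rw [h1, heq, Finset.mem_union]
        constructor
        · rintro (h | h)
          · exact h
          · exfalso
            obtain ⟨b, hb, hbe⟩ := Finset.mem_image.mp h
            exact huτ ((Sum.inl.inj hbe) ▸ hb)
        · exact fun h => Or.inl h
      have hws : w ∈ s ↔ Sum.inr () ∈ a := by
        have h1 : w ∈ s ↔ Sum.inr () ∈ s.image e := by
          constructor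
          · intro h; exact hew ▸ Finset.mem_image_of_mem _ h
          · intro h; have := (hmemim s (Sum.inr ())).mp h; simpa [he] using this
        rw [h1, heq, Finset.mem_union]
        constructor
        · rintro (h | h)
          · exact h
          · exfalso
            obtain ⟨b, hb, hbe⟩ := Finset.mem_image.mp h
            simp at hbe
        · exact fun h => Or.inl h
      by_cases hv' : v ∈ s
      · by_cases hw' : w ∈ s
        · -- both: use hlast
          have hcard : a.card = 2 := by
            have h1 : a = {Sum.inl u, Sum.inr ()} := by
              apply Finset.Subset.antisymm haSub
              intro y hy
              rcases Finset.mem_insert.mp hy with rfl | hy2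
              · exact hvs.mp hv'
              · rw [Finset.mem_singleton] at hy2
                subst hy2
                exact hws.mp hw'
            rw [h1]
            rfl
          have hiu : insert u τ ∈ L := by
            rcases hlast with h | h
            · exact h
            · omega
          have hK2 : insert w ((insert u τ).image Subtype.val) ∈ K := by
            rcases hiu with ⟨h, _⟩ | ⟨_, h⟩
            · exact absurd (Finset.mem_insert_self _ _) h
            · exact h
          rw [Finset.image_insert] at hK2
          have hseq : s = insert w (insert (u : W).val T) := by
            ext x
            simp only [Finset.mem_insert]
            constructor
            · intro hx
              by_cases h1 : x = w
              · exact Or.inl h1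
              · by_cases h2 : x = v
                · exact Or.inr (Or.inl h2)
                · exact Or.inr (Or.inr ((hxmem x h2 h1).mp hx))
            · rintro (rfl | rfl | h)
              · exact hw'
              · exact hv'
              · have hxv : x ≠ v := fun hc => hvT (hc ▸ h)
                have hxw : x ≠ w := fun hc => hwT (hc ▸ h)
                exact (hxmem x hxv hxw).mpr h
          rw [hseq]
          exact hK2
        · -- v only
          have hseq : s = insert v T := by
            ext x
            rw [Finset.mem_insert]
            constructor
            · intro hx
              by_cases h2 : x = v
              · exact Or.inl h2
              · have h1 : x ≠ w := fun hc => hw' (hc ▸ hx)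
                exact Or.inr ((hxmem x h2 h1).mp hx)
            · rintro (rfl | h)
              · exact hv'
              · have hxv : x ≠ v := fun hc => hvT (hc ▸ h)
                have hxw : x ≠ w := fun hc => hwT (hc ▸ h)
                exact (hxmem x hxv hxw).mpr h
          rw [hseq]
          exact hv T hTK hvT hwT
      · by_cases hw' : w ∈ s
        · -- w only
          have hseq : s = insert w T := by
            ext x
            rw [Finset.mem_insert]
            constructor
            · intro hx
              by_cases h1 : x = w
              · exact Or.inl h1
              · have h2 : x ≠ v := fun hc => hv' (hc ▸ hx)
                exact Or.inr ((hxmem x h2 h1).mp hx)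
            · rintro (rfl | h)
              · exact hw'
              · have hxv : x ≠ v := fun hc => hvT (hc ▸ h)
                have hxw : x ≠ w := fun hc => hwT (hc ▸ h)
                exact (hxmem x hxv hxw).mpr h
          rw [hseq]
          exact hw T hTK hvT hwT
        · -- neither
          have hseq : s = T := by
            ext x
            constructor
            · intro hx
              have h2 : x ≠ v := fun hc => hv' (hc ▸ hx)
              have h1 : x ≠ w := fun hc => hw' (hc ▸ hx)
              exact (hxmem x h2 h1).mp hx
            · intro h
              have hxv : x ≠ v := fun hc => hvT (hc ▸ h)
              have hxw : x ≠ w := fun hc => hwT (hc ▸ h)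
              exact (hxmem x hxv hxw).mpr h
          rw [hseq]
          exact hTK

end AuxLemmas

/-- A seed star-shaped simplicial sphere of Picard number `ℓ` admitting a
`ℤ₂`-characteristic map has at most `2^ℓ - 1` vertices. -/
theorem stmt_8 (ℓ n m : ℕ) (hl : 1 ≤ ℓ) (K : Set (Finset (Fin m)))
    (hS : IsStarShapedSphere K n) (hpic : m = n + ℓ) (hseed : IsSeed K)
    (hchar : ∃ lam : Fin m → Fin n → ZMod 2, ∀ s, IsFacet K s →
        LinearIndependent (ZMod 2) fun i : {x : Fin m // x ∈ s} => lam i.val) :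
    m ≤ 2 ^ ℓ - 1 := by
  classical
  by_contra hcon
  push_neg at hcon
  have h2l : 1 ≤ 2 ^ ℓ := Nat.one_le_two_pow
  have hm : 2 ^ ℓ ≤ m := by omega
  have hm2 : 2 ≤ m := by
    have : 2 ≤ 2 ^ ℓ := by
      calc 2 = 2 ^ 1 := (pow_one 2).symm
      _ ≤ 2 ^ ℓ := Nat.pow_le_pow_right (by norm_num) hl
    omega
  obtain ⟨hcomplex, hempty, hsing, hfacetcard, f, hli, hcomplete, hint⟩ := hS
  obtain ⟨lam, hlam⟩ := hchar
  -- facets are nonempty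
  have hm0 : 0 < m := by omega
  obtain ⟨F₀, hF₀, hw₀F₀⟩ := exists_facet_s8 (hsing ⟨0, hm0⟩)
  have hn : 0 < n := by
    rw [← hfacetcard F₀ hF₀]
    exact Finset.card_pos.mpr ⟨_, hw₀F₀ (Finset.mem_singleton_self _)⟩
  have hfne : ∀ F, IsFacet K F → F.Nonempty := fun F hF =>
    Finset.card_pos.mp (by rw [hfacetcard F hF]; exact hn)
  -- the characteristic linear map
  set φ : (Fin m → ZMod 2) →ₗ[ZMod 2] (Fin n → ZMod 2) :=
    (Fintype.linearCombination (ZMod 2) lam) with hφ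
  have hφapp : ∀ x : Fin m → ZMod 2, φ x = ∑ j, x j • lam j := fun x =>
    Fintype.linearCombination_apply ..
  have hker : ∀ x : Fin m → ZMod 2, x ∈ LinearMap.ker φ ↔ ∑ j, x j • lam j = 0 := by
    intro x; rw [LinearMap.mem_ker, hφapp]
  have hsurj : LinearMap.range φ = ⊤ := by
    refine le_antisymm le_top ?_
    rw [hφ, Fintype.range_linearCombination]
    have hcard' : Fintype.card {x : Fin m // x ∈ F₀} =
        Module.finrank (ZMod 2) (Fin n → ZMod 2) := by
      simp [Module.finrank_pi, hfacetcard F₀ hF₀]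
    have : Nonempty {x : Fin m // x ∈ F₀} := by
      obtain ⟨x, hx⟩ := hfne F₀ hF₀; exact ⟨⟨x, hx⟩⟩
    have hsp := (hlam F₀ hF₀).span_eq_top_of_card_eq_finrank hcard'
    calc (⊤ : Submodule (ZMod 2) (Fin n → ZMod 2))
        = Submodule.span (ZMod 2) (Set.range fun i : {x : Fin m // x ∈ F₀} => lam i.val) :=
          hsp.symm
      _ ≤ Submodule.span (ZMod 2) (Set.range lam) := by
          apply Submodule.span_mono
          rintro y ⟨i, rfl⟩
          exact ⟨i.val, rfl⟩
  rcases gale hpic hm φ hsurj with ⟨v, w, hvw, hGale⟩ | ⟨i, hGale⟩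
  · -- two distinct vertices with equal Gale vectors
    -- every facet contains v or w
    have hfvw : ∀ F, IsFacet K F → v ∈ F ∨ w ∈ F := by
      intro F hF
      by_contra hno
      push_neg at hno
      obtain ⟨x, hx0, hxv, hxsupp⟩ :=
        ker_vec (hfacetcard F hF) (hfne F hF) (hlam F hF) hno.1
      have hxker : x ∈ LinearMap.ker φ := (hker x).mpr hx0
      have hxw : x w = 0 := by
        by_contra hxw
        rcases hxsupp w hxw with h | h
        · exact hvw h.symm
        · exact hno.2 h
      have := hGale x hxker
      rw [hxv, hxw] at this
      exact one_ne_zero this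
    -- wedge conditions
    have hv : ∀ σ, σ ∈ K → v ∉ σ → w ∉ σ → insert v σ ∈ K := by
      intro σ hσ hvσ hwσ
      obtain ⟨F, hF, hσF⟩ := exists_facet_s8 hσ
      rcases hfvw F hF with hvF | hwF
      · exact hcomplex F hF.1 _ (Finset.insert_subset hvF hσF)
      · by_cases hvF : v ∈ F
        · exact hcomplex F hF.1 _ (Finset.insert_subset hvF hσF)
        · obtain ⟨F', hF', hRF', hwF'⟩ := pseudo hli hcomplete hint hF hwF
          have hvF' : v ∈ F' := by
            rcases hfvw F' hF' with h | h
            · exact h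
            · exact absurd h hwF'
          have hσF' : σ ⊆ F' := fun x hx =>
            hRF' (Finset.mem_erase.mpr ⟨fun hc => hwσ (hc ▸ hx), hσF hx⟩)
          exact hcomplex F' hF'.1 _ (Finset.insert_subset hvF' hσF')
    have hw : ∀ σ, σ ∈ K → v ∉ σ → w ∉ σ → insert w σ ∈ K := by
      intro σ hσ hvσ hwσ
      obtain ⟨F, hF, hσF⟩ := exists_facet_s8 hσ
      rcases hfvw F hF with hvF | hwF
      · by_cases hwF : w ∈ F
        · exact hcomplex F hF.1 _ (Finset.insert_subset hwF hσF)
        · obtain ⟨F', hF', hRF', hvF'⟩ := pseudo hli hcomplete hint hF hvF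
          have hwF' : w ∈ F' := by
            rcases hfvw F' hF' with h | h
            · exact absurd h hvF'
            · exact h
          have hσF' : σ ⊆ F' := fun x hx =>
            hRF' (Finset.mem_erase.mpr ⟨fun hc => hvσ (hc ▸ hx), hσF hx⟩)
          exact hcomplex F' hF'.1 _ (Finset.insert_subset hwF' hσF')
      · exact hcomplex F hF.1 _ (Finset.insert_subset hwF hσF)
    exact hseed (is_wedge hcomplex hvw hv hw)
  · -- a vertex contained in every facet: geometric contradiction
    have hifacet : ∀ F, IsFacet K F → i ∈ F := by
      intro F hF
      by_contra hiF
      obtain ⟨x, hx0, hxi, -⟩ :=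
        ker_vec (hfacetcard F hF) (hfne F hF) (hlam F hF) hiF
      have := hGale x ((hker x).mpr hx0)
      rw [hxi] at this
      exact one_ne_zero this
    obtain ⟨σ, hσK, c, hc0, hc⟩ := hcomplete (-(f i))
    obtain ⟨F, hF, hσF⟩ := exists_facet_s8 hσK
    have hσ' : insert i σ ∈ K :=
      hcomplex F hF.1 _ (Finset.insert_subset (hifacet F hF) hσF)
    have hiσ' : i ∈ insert i σ := Finset.mem_insert_self _ _
    -- a vanishing nontrivial combination
    set g : Fin m → ℝ := fun j => (if j ∈ σ then c j else 0) + (if j = i then 1 else 0)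
      with hg
    have hgsum : ∑ j ∈ insert i σ, g j • f j = 0 := by
      have hsplit : ∑ j ∈ insert i σ, g j • f j =
          (∑ j ∈ insert i σ, (if j ∈ σ then c j else 0) • f j) +
            ∑ j ∈ insert i σ, (if j = i then (1:ℝ) else 0) • f j := by
        rw [← Finset.sum_add_distrib]
        exact Finset.sum_congr rfl fun j _ => by rw [hg, add_smul]
      have h1 : ∑ j ∈ insert i σ, (if j ∈ σ then c j else 0) • f j
          = ∑ j ∈ σ, c j • f j := by
        rw [← Finset.sum_subset (Finset.subset_insert i σ)
          (fun j _ hj => by rw [if_neg hj, zero_smul])]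
        exact Finset.sum_congr rfl fun j hj => by rw [if_pos hj]
      have h2 : ∑ j ∈ insert i σ, (if j = i then (1:ℝ) else 0) • f j = f i := by
        rw [Finset.sum_eq_single i (fun j _ hj => by rw [if_neg hj, zero_smul])
          (fun h => absurd hiσ' h)]
        rw [if_pos rfl, one_smul]
      rw [hsplit, h1, h2, ← hc]
      module
    have hgz := coeff_unique (hli _ hσ') (c' := fun _ => 0)
      (by rw [hgsum]; simp) i hiσ'
    rw [hg] at hgz
    simp only [if_pos rfl] at hgz
    by_cases hiσ : i ∈ σ
    · rw [if_pos hiσ] at hgz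
      norm_num at hgz
      have := hc0 i
      linarith
    · rw [if_neg hiσ] at hgz
      norm_num at hgz
end

section
/- Let K be a pure (n−1)-dimensional simplicial complex on vertex set V, v ∈ V, and let λ : V(wed_v K) → Zⁿ⁺¹ be any map (not necessarily characteristic) with new vertices v₁, v₂ such that {λ(v₁), λ(v₂)} is a unimodular set (extends to a Z-basis of Zⁿ⁺¹). Then λ is a Z-characteristic map over wed_v(K) if and only if the two projections proj_{v₁} λ and proj_{v₂} λ are Z-characteristic maps over K. -/
/-- A `ℤ`-characteristic map over `K` with values in the `ℤ`-module `M`: the vectors of every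
facet form a `ℤ`-basis of `M`. -/
def IsZCharMap {V : Type*} (K : Set (Finset V)) {M : Type*} [AddCommGroup M] [Module ℤ M]
    (lam : V → M) : Prop :=
  ∀ s, IsFacet K s → ∃ b : Module.Basis {x : V // x ∈ s} ℤ M, ∀ i : {x : V // x ∈ s}, b i = lam i.val

/-! ### Linear algebra helpers -/

section LinAlg

variable {M : Type*} [AddCommGroup M]

lemma basisFam_iff {ι : Type*} (g : ι → M) :
    (∃ b : Module.Basis ι ℤ M, ∀ i, b i = g i) ↔
      LinearIndependent ℤ g ∧ ⊤ ≤ Submodule.span ℤ (Set.range g) := by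
  constructor
  · rintro ⟨b, hb⟩
    have : ⇑b = g := funext hb
    refine ⟨this ▸ b.linearIndependent, ?_⟩
    rw [← this, b.span_eq]
  · rintro ⟨h1, h2⟩
    exact ⟨Module.Basis.mk h1 h2, fun i => Module.Basis.mk_apply h1 h2 i⟩

lemma basisFam_reindex {ι κ : Type*} (e : ι ≃ κ) (g : κ → M) :
    (∃ b : Module.Basis κ ℤ M, ∀ i, b i = g i) ↔ (∃ b : Module.Basis ι ℤ M, ∀ i, b i = g (e i)) := by
  constructor
  · rintro ⟨b, hb⟩
    exact ⟨b.reindex e.symm, fun i => by rw [Module.Basis.reindex_apply, Equiv.symm_symm, hb]⟩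
  · rintro ⟨b, hb⟩
    refine ⟨b.reindex e, fun i => ?_⟩
    rw [Module.Basis.reindex_apply, hb, Equiv.apply_symm_apply]

lemma basisFam_congr {ι : Type*} {g h : ι → M} (hgh : ∀ i, g i = h i) :
    (∃ b : Module.Basis ι ℤ M, ∀ i, b i = g i) ↔ (∃ b : Module.Basis ι ℤ M, ∀ i, b i = h i) := by
  have : g = h := funext hgh
  rw [this]

lemma key_quot [NoZeroSMulDivisors ℤ M]
    (x : M) (hx : x ≠ 0) {ι : Type*} (f : ι → M) :
    (∃ b : Module.Basis (Option ι) ℤ M, ∀ i, b i = Option.elim i x f) ↔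
    (∃ b : Module.Basis ι ℤ (M ⧸ Submodule.span ℤ {x}), ∀ i,
        b i = Submodule.Quotient.mk (f i)) := by
  classical
  rw [basisFam_iff, basisFam_iff]
  set p := Submodule.span ℤ ({x} : Set M) with hp
  have hxp : x ∈ p := Submodule.mem_span_singleton_self x
  have hmk0 : (Submodule.Quotient.mk x : M ⧸ p) = 0 := (Submodule.Quotient.mk_eq_zero p).2 hxp
  constructor
  · rintro ⟨h1, h2⟩
    obtain ⟨b, hb⟩ := (basisFam_iff (fun o : Option ι => Option.elim o x f)).2 ⟨h1, h2⟩
    constructor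
    · have hcd : ∀ l : Option ι →₀ ℤ, ∀ j : ι,
          Finsupp.lcomapDomain (M := ℤ) (R := ℤ) (some : ι → Option ι)
            (Option.some_injective ι) l j = l (some j) := fun l j => rfl
      set φ : M →ₗ[ℤ] (ι →₀ ℤ) :=
        (Finsupp.lcomapDomain (some : ι → Option ι) (Option.some_injective ι)).comp
          (b.repr : M →ₗ[ℤ] (Option ι →₀ ℤ)) with hφ
      have hφx : x ∈ LinearMap.ker φ := by
        have hbx : b none = x := by simpa using hb none
        have : b.repr x = Finsupp.single none 1 := by
          rw [← hbx]; exact b.repr_self none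
        simp only [LinearMap.mem_ker, hφ, LinearMap.comp_apply]
        ext j
        rw [LinearEquiv.coe_coe, this, hcd]
        exact Finsupp.single_eq_of_ne (by simp)
      have hle : p ≤ LinearMap.ker φ := by
        rw [hp, Submodule.span_le, Set.singleton_subset_iff]; exact hφx
      set ψ := p.liftQ φ hle with hψ
      have hcomp : ∀ i : ι, ψ (Submodule.Quotient.mk (f i)) = Finsupp.single i 1 := by
        intro i
        rw [hψ, Submodule.liftQ_apply, hφ, LinearMap.comp_apply]
        have hbi : b (some i) = f i := by simpa using hb (some i)
        have : b.repr (f i) = Finsupp.single (some i) 1 := by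
          rw [← hbi]; exact b.repr_self (some i)
        ext j
        rw [LinearEquiv.coe_coe, this, hcd]
        rw [Finsupp.single_apply, Finsupp.single_apply]
        simp [Option.some_inj]
      refine LinearIndependent.of_comp ψ ?_
      have : (⇑ψ ∘ fun i => (Submodule.Quotient.mk (f i) : M ⧸ p)) =
          fun i => Finsupp.single i (1 : ℤ) := funext fun i => hcomp i
      rw [this]
      exact (Finsupp.basisSingleOne (R := ℤ) (ι := ι)).linearIndependent
    · have h2' : Submodule.map p.mkQ (Submodule.span ℤ
          (Set.range fun o : Option ι => Option.elim o x f)) = ⊤ := by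
        rw [top_le_iff] at h2
        rw [h2, Submodule.map_top, Submodule.range_mkQ]
      rw [Submodule.map_span] at h2'
      rw [← top_le_iff] at h2'
      refine le_trans h2' (Submodule.span_le.2 ?_)
      rintro y ⟨z, ⟨o, rfl⟩, rfl⟩
      cases o with
      | none =>
        simp only [Option.elim_none, Submodule.mkQ_apply]
        rw [hmk0]
        exact Submodule.zero_mem _
      | some i =>
        exact Submodule.subset_span ⟨i, rfl⟩
  · rintro ⟨h1, h2⟩
    constructor
    · have hfx : LinearIndependent ℤ (fun _ : Unit => (⟨x, hxp⟩ : p)) := by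
        refine linearIndependent_unique_iff.2 ?_
        intro h
        exact hx (congrArg Subtype.val h)
      have hg : LinearIndependent ℤ ((Submodule.Quotient.mk (p := p)) ∘ f) := h1
      have hsum := LinearIndependent.sumElim_of_quotient hfx f hg
      have he : (Sum.elim (fun _ : Unit => ((⟨x, hxp⟩ : p) : M)) f) ∘
          (fun o : Option ι => (Option.elim o (Sum.inl ()) Sum.inr : Unit ⊕ ι)) =
          fun o : Option ι => Option.elim o x f := by
        funext o; cases o <;> rfl
      have hinj : Function.Injective
          (fun o : Option ι => (Option.elim o (Sum.inl ()) Sum.inr : Unit ⊕ ι)) := by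
        rintro (_|a) (_|b) h <;> simp_all
      have := hsum.comp _ hinj
      rwa [he] at this
    · set W := Submodule.span ℤ (Set.range fun o : Option ι => Option.elim o x f) with hW
      have hxW : x ∈ W := Submodule.subset_span ⟨none, rfl⟩
      have hpW : p ≤ W := by
        rw [hp, Submodule.span_le, Set.singleton_subset_iff]; exact hxW
      have hmap : Submodule.map p.mkQ W = ⊤ := by
        rw [← top_le_iff]
        have : Submodule.span ℤ (Set.range fun i =>
            (Submodule.Quotient.mk (f i) : M ⧸ p)) ≤ Submodule.map p.mkQ W := by
          refine Submodule.span_le.2 ?_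
          rintro y ⟨i, rfl⟩
          exact ⟨f i, Submodule.subset_span ⟨some i, rfl⟩, rfl⟩
        exact le_trans h2 this
      have hcm := congrArg (Submodule.comap p.mkQ) hmap
      rw [Submodule.comap_map_eq, Submodule.ker_mkQ, Submodule.comap_top,
        sup_of_le_left hpW] at hcm
      rw [hcm]

lemma basisFam_insert {α : Type*} [DecidableEq α]
    {t : Finset α} {a : α} (ha : a ∉ t) (g : α → M) :
    (∃ b : Module.Basis {y // y ∈ insert a t} ℤ M, ∀ i, b i = g i.val) ↔
    (∃ b : Module.Basis (Option {y // y ∈ t}) ℤ M, ∀ o, b o = Option.elim o (g a)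
        fun j => g j.val) := by
  refine (basisFam_reindex (Finset.subtypeInsertEquivOption ha).symm _).trans
    (basisFam_congr ?_)
  rintro (_|j) <;> rfl

end LinAlg

/-! ### Combinatorics of the wedge -/

section Comb

variable {V : Type*} [DecidableEq V] {K : Set (Finset V)} {v : V}

lemma inl_not_mem_image {τ : Finset V} (hτv : v ∉ τ) :
    (Sum.inl v : V ⊕ Unit) ∉ τ.image Sum.inl := by
  simp only [Finset.mem_image, not_exists]
  rintro a ⟨ha, h⟩
  exact hτv ((Sum.inl.injEq _ _ ▸ h : a = v) ▸ ha)

lemma inr_not_mem_image {τ : Finset V} : (Sum.inr () : V ⊕ Unit) ∉ τ.image Sum.inl := by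
  simp

lemma mem_of_inl_mem_image {τ : Finset V} {w : V}
    (h : (Sum.inl w : V ⊕ Unit) ∈ τ.image Sum.inl) : w ∈ τ := by
  rw [Finset.mem_image] at h
  obtain ⟨a, ha, hh⟩ := h
  exact (Sum.inl.injEq _ _ ▸ hh : a = w) ▸ ha

lemma mem_wed_pair {τ : Finset V} (hτv : v ∉ τ) (hτ : τ ∈ K) (h : insert v τ ∈ K) :
    insert (Sum.inl v) (insert (Sum.inr ()) (τ.image Sum.inl)) ∈ wed K v :=
  ⟨{Sum.inl v, Sum.inr ()}, subset_rfl, τ, hτv, hτ,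
    by rw [Finset.insert_union, ← Finset.insert_eq], Or.inl h⟩

lemma mem_wed_left {τ : Finset V} (hτv : v ∉ τ) (hτ : τ ∈ K) :
    insert (Sum.inl v) (τ.image Sum.inl) ∈ wed K v :=
  ⟨{Sum.inl v}, Finset.singleton_subset_iff.2 (Finset.mem_insert_self _ _), τ, hτv, hτ,
    Finset.insert_eq _ _, Or.inr (by simp)⟩

lemma mem_wed_right {τ : Finset V} (hτv : v ∉ τ) (hτ : τ ∈ K) :
    insert (Sum.inr ()) (τ.image Sum.inl) ∈ wed K v :=
  ⟨{Sum.inr ()}, Finset.singleton_subset_iff.2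
      (Finset.mem_insert_of_mem (Finset.mem_singleton_self _)), τ, hτv, hτ,
    Finset.insert_eq _ _, Or.inr (by simp)⟩

lemma wed_cases {s : Finset (V ⊕ Unit)} (hs : s ∈ wed K v) :
    ∃ τ : Finset V, v ∉ τ ∧ τ ∈ K ∧
      (s = τ.image Sum.inl ∨
       s = insert (Sum.inl v) (τ.image Sum.inl) ∨
       s = insert (Sum.inr ()) (τ.image Sum.inl) ∨
       (s = insert (Sum.inl v) (insert (Sum.inr ()) (τ.image Sum.inl)) ∧ insert v τ ∈ K)) := by
  obtain ⟨a, hsub, τ, hτv, hτ, hseq, hcond⟩ := hs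
  refine ⟨τ, hτv, hτ, ?_⟩
  by_cases h1 : (Sum.inl v : V ⊕ Unit) ∈ a <;> by_cases h2 : (Sum.inr () : V ⊕ Unit) ∈ a
  · -- a = {inl v, inr ()}
    have ha : a = ({Sum.inl v, Sum.inr ()} : Finset (V ⊕ Unit)) :=
      le_antisymm hsub (Finset.insert_subset h1 (Finset.singleton_subset_iff.2 h2))
    have hcard : a.card = 2 := by
      rw [ha]; rw [Finset.card_insert_of_notMem (by simp), Finset.card_singleton]
    refine Or.inr (Or.inr (Or.inr ⟨?_, ?_⟩))
    · rw [hseq, ha, Finset.insert_union, ← Finset.insert_eq]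
    · rcases hcond with h | h
      · exact h
      · omega
  · have ha : a = ({Sum.inl v} : Finset (V ⊕ Unit)) := by
      refine le_antisymm ?_ (Finset.singleton_subset_iff.2 h1)
      intro z hz
      rcases Finset.mem_insert.1 (hsub hz) with h | h
      · rw [Finset.mem_singleton]; exact h
      · exact absurd (Finset.mem_singleton.1 h ▸ hz) h2
    refine Or.inr (Or.inl ?_)
    rw [hseq, ha, ← Finset.insert_eq]
  · have ha : a = ({Sum.inr ()} : Finset (V ⊕ Unit)) := by
      refine le_antisymm ?_ (Finset.singleton_subset_iff.2 h2)
      intro z hz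
      rcases Finset.mem_insert.1 (hsub hz) with h | h
      · exact absurd (h ▸ hz) h1
      · exact h
    refine Or.inr (Or.inr (Or.inl ?_))
    rw [hseq, ha, ← Finset.insert_eq]
  · have ha : a = (∅ : Finset (V ⊕ Unit)) := by
      refine Finset.eq_empty_of_forall_notMem ?_
      intro z hz
      rcases Finset.mem_insert.1 (hsub hz) with h | h
      · exact h1 (h ▸ hz)
      · exact h2 (Finset.mem_singleton.1 h ▸ hz)
    exact Or.inl (by rw [hseq, ha, Finset.empty_union])

lemma subset_of_img_subset {σ τ : Finset V} {t : Finset (V ⊕ Unit)}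
    (h : σ.image Sum.inl ⊆ t) (hvσ : v ∉ σ)
    (ht : t = insert (Sum.inl v) (τ.image Sum.inl) ∨
          t = insert (Sum.inr ()) (τ.image Sum.inl) ∨
          t = insert (Sum.inl v) (insert (Sum.inr ()) (τ.image Sum.inl))) : σ ⊆ τ := by
  intro w hw
  have hmem : (Sum.inl w : V ⊕ Unit) ∈ t := h (Finset.mem_image_of_mem _ hw)
  have hwv : w ≠ v := fun hh => hvσ (hh ▸ hw)
  rcases ht with rfl | rfl | rfl
  · rcases Finset.mem_insert.1 hmem with hh | hh
    · exact absurd (Sum.inl.injEq _ _ ▸ hh : w = v) hwv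
    · exact mem_of_inl_mem_image hh
  · rcases Finset.mem_insert.1 hmem with hh | hh
    · exact absurd hh (by simp)
    · exact mem_of_inl_mem_image hh
  · rcases Finset.mem_insert.1 hmem with hh | hh
    · exact absurd (Sum.inl.injEq _ _ ▸ hh : w = v) hwv
    · rcases Finset.mem_insert.1 hh with hh' | hh'
      · exact absurd hh' (by simp)
      · exact mem_of_inl_mem_image hh'

lemma facet_wed_pair (hK : IsComplex K) {τ : Finset V} (hτv : v ∉ τ)
    (hf : IsFacet K (insert v τ)) :
    IsFacet (wed K v) (insert (Sum.inl v) (insert (Sum.inr ()) (τ.image Sum.inl))) := by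
  obtain ⟨hmem, hmax⟩ := hf
  refine ⟨mem_wed_pair hτv (hK _ hmem τ (Finset.subset_insert _ _)) hmem, ?_⟩
  intro t ht hsub
  obtain ⟨τ', hτ'v, hτ', hshape⟩ := wed_cases ht
  have hinl : (Sum.inl v : V ⊕ Unit) ∈ t := hsub (Finset.mem_insert_self _ _)
  have hinr : (Sum.inr () : V ⊕ Unit) ∈ t :=
    hsub (Finset.mem_insert_of_mem (Finset.mem_insert_self _ _))
  rcases hshape with rfl | rfl | rfl | ⟨rfl, hvτ'⟩
  · exact absurd (mem_of_inl_mem_image hinl) hτ'v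
  · rcases Finset.mem_insert.1 hinr with h | h
    · exact absurd h (by simp)
    · exact absurd h inr_not_mem_image
  · rcases Finset.mem_insert.1 hinl with h | h
    · exact absurd h (by simp)
    · exact absurd (mem_of_inl_mem_image h) hτ'v
  · -- t is a pair shape over τ'
    have hττ' : τ ⊆ τ' := by
      refine subset_of_img_subset (fun y hy => hsub ?_) hτv (Or.inr (Or.inr rfl))
      exact Finset.mem_insert_of_mem (Finset.mem_insert_of_mem hy)
    have : insert v τ' = insert v τ :=
      hmax _ hvτ' (Finset.insert_subset_insert _ hττ')
    have hττ : τ' = τ := by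
      have h1 : τ' = (insert v τ').erase v := by rw [Finset.erase_insert hτ'v]
      have h2 : τ = (insert v τ).erase v := by rw [Finset.erase_insert hτv]
      rw [h1, this, ← h2]
    rw [hττ]

lemma facet_wed_left (hK : IsComplex K) {σ : Finset V} (hvσ : v ∉ σ)
    (hf : IsFacet K σ) :
    IsFacet (wed K v) (insert (Sum.inl v) (σ.image Sum.inl)) := by
  obtain ⟨hmem, hmax⟩ := hf
  refine ⟨mem_wed_left hvσ hmem, ?_⟩
  intro t ht hsub
  obtain ⟨τ', hτ'v, hτ', hshape⟩ := wed_cases ht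
  have hinl : (Sum.inl v : V ⊕ Unit) ∈ t := hsub (Finset.mem_insert_self _ _)
  have himg : σ.image Sum.inl ⊆ t := fun y hy => hsub (Finset.mem_insert_of_mem hy)
  rcases hshape with rfl | rfl | rfl | ⟨rfl, hvτ'⟩
  · exact absurd (mem_of_inl_mem_image hinl) hτ'v
  · have hστ' : σ ⊆ τ' := subset_of_img_subset himg hvσ (Or.inl rfl)
    have := hmax _ hτ' hστ'
    rw [this]
  · rcases Finset.mem_insert.1 hinl with h | h
    · exact absurd h (by simp)
    · exact absurd (mem_of_inl_mem_image h) hτ'v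
  · have hστ' : σ ⊆ τ' := subset_of_img_subset himg hvσ (Or.inr (Or.inr rfl))
    have : insert v τ' = σ := hmax _ hvτ' (hστ'.trans (Finset.subset_insert _ _))
    exact absurd (this ▸ Finset.mem_insert_self v τ') hvσ

lemma facet_wed_right (hK : IsComplex K) {σ : Finset V} (hvσ : v ∉ σ)
    (hf : IsFacet K σ) :
    IsFacet (wed K v) (insert (Sum.inr ()) (σ.image Sum.inl)) := by
  obtain ⟨hmem, hmax⟩ := hf
  refine ⟨mem_wed_right hvσ hmem, ?_⟩
  intro t ht hsub
  obtain ⟨τ', hτ'v, hτ', hshape⟩ := wed_cases ht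
  have hinr : (Sum.inr () : V ⊕ Unit) ∈ t := hsub (Finset.mem_insert_self _ _)
  have himg : σ.image Sum.inl ⊆ t := fun y hy => hsub (Finset.mem_insert_of_mem hy)
  rcases hshape with rfl | rfl | rfl | ⟨rfl, hvτ'⟩
  · exact absurd hinr inr_not_mem_image
  · rcases Finset.mem_insert.1 hinr with h | h
    · exact absurd h (by simp)
    · exact absurd h inr_not_mem_image
  · have hστ' : σ ⊆ τ' := subset_of_img_subset himg hvσ (Or.inr (Or.inl rfl))
    have := hmax _ hτ' hστ'
    rw [this]
  · have hστ' : σ ⊆ τ' := subset_of_img_subset himg hvσ (Or.inr (Or.inr rfl))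
    have : insert v τ' = σ := hmax _ hvτ' (hστ'.trans (Finset.subset_insert _ _))
    exact absurd (this ▸ Finset.mem_insert_self v τ') hvσ

lemma facet_wed_shapes (hK : IsComplex K) {s : Finset (V ⊕ Unit)}
    (hs : IsFacet (wed K v) s) :
    (∃ τ : Finset V, v ∉ τ ∧ IsFacet K (insert v τ) ∧
        s = insert (Sum.inl v) (insert (Sum.inr ()) (τ.image Sum.inl))) ∨
    (∃ σ : Finset V, v ∉ σ ∧ IsFacet K σ ∧ s = insert (Sum.inl v) (σ.image Sum.inl)) ∨
    (∃ σ : Finset V, v ∉ σ ∧ IsFacet K σ ∧ s = insert (Sum.inr ()) (σ.image Sum.inl)) := by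
  obtain ⟨hsW, hmax⟩ := hs
  obtain ⟨τ, hτv, hτK, hshape⟩ := wed_cases hsW
  rcases hshape with rfl | rfl | rfl | ⟨rfl, hvτ⟩
  · -- s = image only: not a facet
    exfalso
    have ht := mem_wed_left (K := K) hτv hτK
    have := hmax _ ht (Finset.subset_insert _ _)
    exact inl_not_mem_image hτv (this ▸ Finset.mem_insert_self _ _)
  · -- s = insert (inl v) imgτ
    refine Or.inr (Or.inl ⟨τ, hτv, ⟨hτK, ?_⟩, rfl⟩)
    intro σ hσ hsub
    by_cases hvσ : v ∈ σ
    · exfalso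
      have hins : insert v τ ∈ K := hK σ hσ _ (Finset.insert_subset hvσ hsub)
      have ht := mem_wed_pair hτv hτK hins
      have heq := hmax _ ht
        (Finset.insert_subset_insert _ (Finset.subset_insert _ _))
      have : (Sum.inr () : V ⊕ Unit) ∈ insert (Sum.inl v) (τ.image Sum.inl) := by
        rw [← heq]
        exact Finset.mem_insert_of_mem (Finset.mem_insert_self _ _)
      rcases Finset.mem_insert.1 this with h | h
      · exact absurd h (by simp)
      · exact absurd h inr_not_mem_image
    · have ht := mem_wed_left (K := K) hvσ hσ
      have heq := hmax _ ht
        (Finset.insert_subset_insert _ (Finset.image_subset_image hsub))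
      refine le_antisymm ?_ hsub
      refine subset_of_img_subset (fun y hy => ?_) hvσ (Or.inl rfl)
      rw [← heq]
      exact Finset.mem_insert_of_mem hy
  · -- s = insert (inr ()) imgτ
    refine Or.inr (Or.inr ⟨τ, hτv, ⟨hτK, ?_⟩, rfl⟩)
    intro σ hσ hsub
    by_cases hvσ : v ∈ σ
    · exfalso
      have hins : insert v τ ∈ K := hK σ hσ _ (Finset.insert_subset hvσ hsub)
      have ht := mem_wed_pair hτv hτK hins
      have heq := hmax _ ht (Finset.subset_insert _ _)
      have : (Sum.inl v : V ⊕ Unit) ∈ insert (Sum.inr ()) (τ.image Sum.inl) := by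
        rw [← heq]
        exact Finset.mem_insert_self _ _
      rcases Finset.mem_insert.1 this with h | h
      · exact absurd h (by simp)
      · exact absurd (mem_of_inl_mem_image h) hτv
    · have ht := mem_wed_right (K := K) hvσ hσ
      have heq := hmax _ ht
        (Finset.insert_subset_insert _ (Finset.image_subset_image hsub))
      refine le_antisymm ?_ hsub
      refine subset_of_img_subset (fun y hy => ?_) hvσ (Or.inr (Or.inl rfl))
      rw [← heq]
      exact Finset.mem_insert_of_mem hy
  · -- s = pair shape
    refine Or.inl ⟨τ, hτv, ⟨hvτ, ?_⟩, rfl⟩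
    intro σ hσ hsub
    have hvinσ : v ∈ σ := hsub (Finset.mem_insert_self _ _)
    have hτ'K : σ.erase v ∈ K := hK σ hσ _ (Finset.erase_subset _ _)
    have hττ' : τ ⊆ σ.erase v := by
      intro w hw
      refine Finset.mem_erase.2 ⟨fun hh => hτv (hh ▸ hw), hsub (Finset.mem_insert_of_mem hw)⟩
    have hinsτ' : insert v (σ.erase v) ∈ K := by
      rw [Finset.insert_erase hvinσ]; exact hσ
    have ht := mem_wed_pair (Finset.notMem_erase _ _) hτ'K hinsτ'
    have heq := hmax _ ht (Finset.insert_subset_insert _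
      (Finset.insert_subset_insert _ (Finset.image_subset_image hττ')))
    have hsub2 : σ.erase v ⊆ τ := by
      intro w hw
      have hwv : w ≠ v := (Finset.mem_erase.1 hw).1
      have : (Sum.inl w : V ⊕ Unit) ∈
          insert (Sum.inl v) (insert (Sum.inr ()) (τ.image Sum.inl)) := by
        rw [← heq]
        exact Finset.mem_insert_of_mem (Finset.mem_insert_of_mem
          (Finset.mem_image_of_mem _ hw))
      rcases Finset.mem_insert.1 this with h | h
      · exact absurd (Sum.inl.injEq _ _ ▸ h : w = v) hwv
      · rcases Finset.mem_insert.1 h with h' | h'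
        · exact absurd h' (by simp)
        · exact mem_of_inl_mem_image h'
    have : σ.erase v = τ := le_antisymm hsub2 hττ'
    rw [← Finset.insert_erase hvinσ, this]

end Comb

/-! ### Per-facet equivalences -/

section PerFacet

variable {V : Type*} [DecidableEq V]

noncomputable def imgEquiv (σ : Finset V) :
    {w // w ∈ σ} ≃ {y // y ∈ σ.image (Sum.inl : V → V ⊕ Unit)} :=
  Equiv.ofBijective (fun w => ⟨Sum.inl w.1, Finset.mem_image_of_mem _ w.2⟩)
    ⟨fun a b h => Subtype.ext (Sum.inl_injective (congrArg Subtype.val h)),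
     by
      rintro ⟨y, hy⟩
      rw [Finset.mem_image] at hy
      obtain ⟨w, hw, rfl⟩ := hy
      exact ⟨⟨w, hw⟩, rfl⟩⟩

variable {n : ℕ} {v : V} {Λ : V ⊕ Unit → Fin (n + 1) → ℤ}

lemma condB1 (hx1 : Λ (Sum.inl v) ≠ 0) {σ : Finset V} (hvσ : v ∉ σ) :
    (∃ b : Module.Basis {y // y ∈ insert (Sum.inl v) (σ.image Sum.inl)} ℤ (Fin (n + 1) → ℤ),
        ∀ i, b i = Λ i.val) ↔
    (∃ b : Module.Basis {w // w ∈ σ} ℤ ((Fin (n + 1) → ℤ) ⧸ Submodule.span ℤ {Λ (Sum.inl v)}),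
        ∀ i, b i = Submodule.Quotient.mk
          (if i.val = v then Λ (Sum.inr ()) else Λ (Sum.inl i.val))) := by
  refine (basisFam_insert (inl_not_mem_image hvσ) Λ).trans ?_
  refine (key_quot (Λ (Sum.inl v)) hx1
    (fun j : {y // y ∈ σ.image Sum.inl} => Λ j.val)).trans ?_
  refine (basisFam_reindex (imgEquiv σ) _).trans ?_
  refine basisFam_congr fun i => ?_
  have hne : i.val ≠ v := fun h => hvσ (h ▸ i.2)
  rw [if_neg hne]
  rfl

lemma condB2 (hx2 : Λ (Sum.inr ()) ≠ 0) {σ : Finset V} (hvσ : v ∉ σ) :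
    (∃ b : Module.Basis {y // y ∈ insert (Sum.inr ()) (σ.image Sum.inl)} ℤ (Fin (n + 1) → ℤ),
        ∀ i, b i = Λ i.val) ↔
    (∃ b : Module.Basis {w // w ∈ σ} ℤ ((Fin (n + 1) → ℤ) ⧸ Submodule.span ℤ {Λ (Sum.inr ())}),
        ∀ i, b i = Submodule.Quotient.mk (Λ (Sum.inl i.val))) := by
  refine (basisFam_insert (inr_not_mem_image (τ := σ)) Λ).trans ?_
  refine (key_quot (Λ (Sum.inr ())) hx2
    (fun j : {y // y ∈ σ.image Sum.inl} => Λ j.val)).trans ?_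
  refine (basisFam_reindex (imgEquiv σ) _).trans ?_
  exact basisFam_congr fun i => rfl

lemma condA1 (hx1 : Λ (Sum.inl v) ≠ 0) {τ : Finset V} (hτv : v ∉ τ) :
    (∃ b : Module.Basis {y // y ∈ insert (Sum.inl v) (insert (Sum.inr ()) (τ.image Sum.inl))} ℤ
        (Fin (n + 1) → ℤ), ∀ i, b i = Λ i.val) ↔
    (∃ b : Module.Basis {w // w ∈ insert v τ} ℤ
        ((Fin (n + 1) → ℤ) ⧸ Submodule.span ℤ {Λ (Sum.inl v)}),
        ∀ i, b i = Submodule.Quotient.mk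
          (if i.val = v then Λ (Sum.inr ()) else Λ (Sum.inl i.val))) := by
  have h1 : (Sum.inl v : V ⊕ Unit) ∉ insert (Sum.inr ()) (τ.image Sum.inl) := by
    rw [Finset.mem_insert]
    rintro (h | h)
    · simp at h
    · exact inl_not_mem_image hτv h
  refine (basisFam_insert h1 Λ).trans ?_
  refine (key_quot (Λ (Sum.inl v)) hx1
    (fun j : {y // y ∈ insert (Sum.inr ()) (τ.image Sum.inl)} => Λ j.val)).trans ?_
  refine (basisFam_insert (inr_not_mem_image (τ := τ))
    (fun z => (Submodule.Quotient.mk (Λ z) :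
      (Fin (n + 1) → ℤ) ⧸ Submodule.span ℤ {Λ (Sum.inl v)}))).trans ?_
  refine (basisFam_reindex (Equiv.optionCongr (imgEquiv τ)) _).trans ?_
  refine Iff.trans (basisFam_congr (h := fun o : Option {w // w ∈ τ} =>
      Option.elim o (Submodule.Quotient.mk (Λ (Sum.inr ())))
        (fun w => Submodule.Quotient.mk (Λ (Sum.inl w.val)))) ?_) ?_
  · rintro (_ | w) <;> rfl
  refine Iff.symm ?_
  refine (basisFam_insert hτv (fun w => (Submodule.Quotient.mk
      (if w = v then Λ (Sum.inr ()) else Λ (Sum.inl w)) :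
      (Fin (n + 1) → ℤ) ⧸ Submodule.span ℤ {Λ (Sum.inl v)}))).trans ?_
  refine basisFam_congr ?_
  rintro (_ | w)
  · simp
  · have hne : w.val ≠ v := fun h => hτv (h ▸ w.2)
    simp [hne]

lemma condA2 (hx2 : Λ (Sum.inr ()) ≠ 0) {τ : Finset V} (hτv : v ∉ τ) :
    (∃ b : Module.Basis {y // y ∈ insert (Sum.inl v) (insert (Sum.inr ()) (τ.image Sum.inl))} ℤ
        (Fin (n + 1) → ℤ), ∀ i, b i = Λ i.val) ↔
    (∃ b : Module.Basis {w // w ∈ insert v τ} ℤ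
        ((Fin (n + 1) → ℤ) ⧸ Submodule.span ℤ {Λ (Sum.inr ())}),
        ∀ i, b i = Submodule.Quotient.mk (Λ (Sum.inl i.val))) := by
  have hcomm : insert (Sum.inl v) (insert (Sum.inr ()) (τ.image Sum.inl)) =
      insert (Sum.inr ()) (insert (Sum.inl v) (τ.image Sum.inl)) := Finset.insert_comm _ _ _
  rw [hcomm]
  have h1 : (Sum.inr () : V ⊕ Unit) ∉ insert (Sum.inl v) (τ.image Sum.inl) := by
    rw [Finset.mem_insert]
    rintro (h | h)
    · simp at h
    · exact inr_not_mem_image h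
  refine (basisFam_insert h1 Λ).trans ?_
  refine (key_quot (Λ (Sum.inr ())) hx2
    (fun j : {y // y ∈ insert (Sum.inl v) (τ.image Sum.inl)} => Λ j.val)).trans ?_
  refine (basisFam_insert (inl_not_mem_image hτv)
    (fun z => (Submodule.Quotient.mk (Λ z) :
      (Fin (n + 1) → ℤ) ⧸ Submodule.span ℤ {Λ (Sum.inr ())}))).trans ?_
  refine (basisFam_reindex (Equiv.optionCongr (imgEquiv τ)) _).trans ?_
  refine Iff.trans (basisFam_congr (h := fun o : Option {w // w ∈ τ} =>
      Option.elim o (Submodule.Quotient.mk (Λ (Sum.inl v)))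
        (fun w => Submodule.Quotient.mk (Λ (Sum.inl w.val)))) ?_) ?_
  · rintro (_ | w) <;> rfl
  refine Iff.symm ?_
  refine (basisFam_insert hτv (fun w => (Submodule.Quotient.mk (Λ (Sum.inl w)) :
      (Fin (n + 1) → ℤ) ⧸ Submodule.span ℤ {Λ (Sum.inr ())}))).trans ?_
  exact basisFam_congr (by rintro (_ | w) <;> rfl)

end PerFacet


/-- Proposition 4.4 of [CP13]: let `Λ` be any map on the vertices of `wed_v K` with values in
`ℤ^{n+1}` such that `{Λ v₁, Λ v₂}` is a unimodular set (linearly independent and its span a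
direct summand, i.e. it extends to a `ℤ`-basis).  Then `Λ` is a `ℤ`-characteristic map over
`wed_v K` iff both projections `proj_{v₁} Λ` and `proj_{v₂} Λ` (with values in the quotients
`ℤ^{n+1}/⟨Λ v₁⟩` resp. `ℤ^{n+1}/⟨Λ v₂⟩`, where `v₂` resp. `v₁` plays the role of `v`) are
`ℤ`-characteristic maps over `K`. -/
theorem stmt_11 {V : Type*} [Fintype V] [DecidableEq V] (n : ℕ) (K : Set (Finset V))
    (hK : IsComplex K) (v : V) (hv : ({v} : Finset V) ∈ K)
    (Λ : V ⊕ Unit → Fin (n + 1) → ℤ)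
    (hind : LinearIndependent ℤ ![Λ (Sum.inl v), Λ (Sum.inr ())])
    (hsummand : ∃ N : Submodule ℤ (Fin (n + 1) → ℤ),
      IsCompl (Submodule.span ℤ {Λ (Sum.inl v), Λ (Sum.inr ())}) N) :
    IsZCharMap (wed K v) Λ ↔
      (IsZCharMap K (fun w : V =>
        (Submodule.Quotient.mk (if w = v then Λ (Sum.inr ()) else Λ (Sum.inl w)) :
          (Fin (n + 1) → ℤ) ⧸ Submodule.span ℤ {Λ (Sum.inl v)})) ∧
       IsZCharMap K (fun w : V =>
        (Submodule.Quotient.mk (Λ (Sum.inl w)) :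
          (Fin (n + 1) → ℤ) ⧸ Submodule.span ℤ {Λ (Sum.inr ())}))) := by
  have hx1 : Λ (Sum.inl v) ≠ 0 := by simpa using hind.ne_zero 0
  have hx2 : Λ (Sum.inr ()) ≠ 0 := by simpa using hind.ne_zero 1
  constructor
  · intro hW
    constructor
    · intro σ hσ
      by_cases hvσ : v ∈ σ
      · have hτv : v ∉ σ.erase v := Finset.notMem_erase _ _
        have hfac : IsFacet K (insert v (σ.erase v)) := by
          rw [Finset.insert_erase hvσ]; exact hσ
        have hWf := hW _ (facet_wed_pair hK hτv hfac)
        have := (condA1 hx1 hτv).1 hWf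
        rw [← Finset.insert_erase hvσ]
        exact this
      · exact (condB1 hx1 hvσ).1 (hW _ (facet_wed_left hK hvσ hσ))
    · intro σ hσ
      by_cases hvσ : v ∈ σ
      · have hτv : v ∉ σ.erase v := Finset.notMem_erase _ _
        have hfac : IsFacet K (insert v (σ.erase v)) := by
          rw [Finset.insert_erase hvσ]; exact hσ
        have hWf := hW _ (facet_wed_pair hK hτv hfac)
        have := (condA2 hx2 hτv).1 hWf
        rw [← Finset.insert_erase hvσ]
        exact this
      · exact (condB2 hx2 hvσ).1 (hW _ (facet_wed_right hK hvσ hσ))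
  · rintro ⟨h1, h2⟩ s hs
    rcases facet_wed_shapes hK hs with ⟨τ, hτv, hfac, rfl⟩ | ⟨σ, hvσ, hfac, rfl⟩ |
      ⟨σ, hvσ, hfac, rfl⟩
    · exact (condA1 hx1 hτv).2 (h1 _ hfac)
    · exact (condB1 hx1 hvσ).2 (h1 _ hfac)
    · exact (condB2 hx2 hvσ).2 (h2 _ hfac)
end

section
/- Let Λ₁, Λ₂ be Z-characteristic maps over wed_v(K) (vertices v₁, v₂ and V(K)∖{v}) such that proj_{v₁} Λ₁ = proj_{v₁} Λ₂ as maps to Zⁿ⁺¹/⟨Λᵢ(v₁)⟩ ≅ Zⁿ and proj_{v₂} Λ₁ = proj_{v₂} Λ₂. Then Λ₁ and Λ₂ are Davis–Januszkiewicz equivalent, i.e., Λ₂ = A·Λ₁ for some A ∈ GL(n+1, Z). -/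
/-- Uniqueness: two `ℤ`-characteristic maps over `wed_v K` whose projections at `v₁` agree
(up to the identification of the two quotients) and whose projections at `v₂` agree are
Davis–Januszkiewicz equivalent, i.e. differ by an element of `GL(n+1, ℤ)`. -/
theorem stmt_13 {V : Type*} [Fintype V] [DecidableEq V] (n : ℕ) (K : Set (Finset V))
    (hK : IsComplex K) (v : V) (hv : ({v} : Finset V) ∈ K)
    (Λ₁ Λ₂ : V ⊕ Unit → Fin (n + 1) → ℤ)
    (h1 : IsZCharMap (wed K v) Λ₁) (h2 : IsZCharMap (wed K v) Λ₂)
    (hproj1 : ∃ e : ((Fin (n + 1) → ℤ) ⧸ Submodule.span ℤ {Λ₁ (Sum.inl v)}) ≃ₗ[ℤ]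
        ((Fin (n + 1) → ℤ) ⧸ Submodule.span ℤ {Λ₂ (Sum.inl v)}),
      ∀ w : V,
        e (Submodule.Quotient.mk (if w = v then Λ₁ (Sum.inr ()) else Λ₁ (Sum.inl w))) =
          Submodule.Quotient.mk (if w = v then Λ₂ (Sum.inr ()) else Λ₂ (Sum.inl w)))
    (hproj2 : ∃ e : ((Fin (n + 1) → ℤ) ⧸ Submodule.span ℤ {Λ₁ (Sum.inr ())}) ≃ₗ[ℤ]
        ((Fin (n + 1) → ℤ) ⧸ Submodule.span ℤ {Λ₂ (Sum.inr ())}),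
      ∀ w : V,
        e (Submodule.Quotient.mk (Λ₁ (Sum.inl w))) =
          Submodule.Quotient.mk (Λ₂ (Sum.inl w))) :
    ∃ A : (Fin (n + 1) → ℤ) ≃ₗ[ℤ] (Fin (n + 1) → ℤ),
      ∀ u : V ⊕ Unit, A (Λ₁ u) = Λ₂ u := by

  classical
  have hempty : (∅ : Finset V) ∈ K := hK {v} hv ∅ (Finset.empty_subset _)
  have ht₀mem : ({Sum.inl v, Sum.inr ()} : Finset (V ⊕ Unit)) ∈ wed K v := by
    refine ⟨{Sum.inl v, Sum.inr ()}, subset_rfl, ∅, Finset.notMem_empty _, hempty, by simp,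
      Or.inl (by simpa using hv)⟩
  obtain ⟨s, ⟨hsw, hsub⟩, hmax⟩ :=
    Set.Finite.exists_maximalFor (fun t => t.card)
      {t | t ∈ wed K v ∧ ({Sum.inl v, Sum.inr ()} : Finset (V ⊕ Unit)) ⊆ t}
      (Set.toFinite _) ⟨_, ht₀mem, subset_rfl⟩
  have hfacet : IsFacet (wed K v) s := by
    refine ⟨hsw, fun t ht hst => ?_⟩
    exact (Finset.eq_of_subset_of_card_le hst
      (hmax ⟨ht, hsub.trans hst⟩ (Finset.card_le_card hst))).symm
  obtain ⟨b₁, hb₁⟩ := h1 s hfacet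
  obtain ⟨b₂, hb₂⟩ := h2 s hfacet
  have hv1 : Sum.inl v ∈ s := hsub (by simp)
  have hv2 : Sum.inr () ∈ s := hsub (by simp)
  set A := b₁.equiv b₂ (Equiv.refl _) with hA
  have hAs : ∀ i : {x // x ∈ s}, A (Λ₁ i.val) = Λ₂ i.val := fun i => by
    rw [← hb₁ i, hA, Module.Basis.equiv_apply, Equiv.refl_apply, hb₂]
  refine ⟨A, ?_⟩
  have key : ∀ (p₁ p₂ : Fin (n + 1) → ℤ)
      (e : ((Fin (n + 1) → ℤ) ⧸ Submodule.span ℤ {p₁}) ≃ₗ[ℤ]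
           ((Fin (n + 1) → ℤ) ⧸ Submodule.span ℤ {p₂})),
      (∀ i : {x // x ∈ s}, e (Submodule.Quotient.mk (Λ₁ i.val)) =
        Submodule.Quotient.mk (Λ₂ i.val)) →
      ∀ y, e (Submodule.Quotient.mk y) = Submodule.Quotient.mk (A y) := by
    intro p₁ p₂ e he y
    have hmaps : (e.toLinearMap ∘ₗ (Submodule.span ℤ {p₁}).mkQ)
        = ((Submodule.span ℤ {p₂}).mkQ ∘ₗ (A : (Fin (n + 1) → ℤ) →ₗ[ℤ] (Fin (n + 1) → ℤ))) := by
      refine b₁.ext fun i => ?_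
      simp only [LinearMap.comp_apply, Submodule.mkQ_apply, LinearEquiv.coe_coe, hb₁]
      rw [hAs i]
      exact he i
    simpa using LinearMap.congr_fun hmaps y
  intro u
  match u with
  | Sum.inr () => exact hAs ⟨Sum.inr (), hv2⟩
  | Sum.inl w =>
    by_cases hwv : w = v
    · subst hwv; exact hAs ⟨Sum.inl w, hv1⟩
    · obtain ⟨e₂, he₂⟩ := hproj2
      obtain ⟨e₁, he₁⟩ := hproj1
      have h2' : ∀ i : {x // x ∈ s}, e₂ (Submodule.Quotient.mk (Λ₁ i.val)) =
          Submodule.Quotient.mk (Λ₂ i.val) := by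
        rintro ⟨(u | ⟨⟩), hu⟩
        · exact he₂ u
        · have z1 : (Submodule.Quotient.mk (Λ₁ (Sum.inr ())) :
              _ ⧸ Submodule.span ℤ {Λ₁ (Sum.inr ())}) = 0 := by
            rw [Submodule.Quotient.mk_eq_zero]
            exact Submodule.mem_span_singleton_self _
          have z2 : (Submodule.Quotient.mk (Λ₂ (Sum.inr ())) :
              _ ⧸ Submodule.span ℤ {Λ₂ (Sum.inr ())}) = 0 := by
            rw [Submodule.Quotient.mk_eq_zero]
            exact Submodule.mem_span_singleton_self _
          rw [z1, map_zero, z2]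
      have h1' : ∀ i : {x // x ∈ s}, e₁ (Submodule.Quotient.mk (Λ₁ i.val)) =
          Submodule.Quotient.mk (Λ₂ i.val) := by
        rintro ⟨(u | ⟨⟩), hu⟩
        · by_cases huv : u = v
          · subst huv
            have z1 : (Submodule.Quotient.mk (Λ₁ (Sum.inl u)) :
                _ ⧸ Submodule.span ℤ {Λ₁ (Sum.inl u)}) = 0 := by
              rw [Submodule.Quotient.mk_eq_zero]
              exact Submodule.mem_span_singleton_self _
            have z2 : (Submodule.Quotient.mk (Λ₂ (Sum.inl u)) :
                _ ⧸ Submodule.span ℤ {Λ₂ (Sum.inl u)}) = 0 := by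
              rw [Submodule.Quotient.mk_eq_zero]
              exact Submodule.mem_span_singleton_self _
            rw [z1, map_zero, z2]
          · have := he₁ u
            rw [if_neg huv, if_neg huv] at this
            exact this
        · have := he₁ v
          rw [if_pos rfl, if_pos rfl] at this
          exact this
      have m2 : A (Λ₁ (Sum.inl w)) - Λ₂ (Sum.inl w) ∈
          Submodule.span ℤ {Λ₂ (Sum.inr ())} :=
        (Submodule.Quotient.eq _).mp ((key _ _ e₂ h2' (Λ₁ (Sum.inl w))).symm.trans (he₂ w))
      have m1 : A (Λ₁ (Sum.inl w)) - Λ₂ (Sum.inl w) ∈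
          Submodule.span ℤ {Λ₂ (Sum.inl v)} := by
        have h := he₁ w
        rw [if_neg hwv, if_neg hwv] at h
        exact (Submodule.Quotient.eq _).mp ((key _ _ e₁ h1' (Λ₁ (Sum.inl w))).symm.trans h)
      obtain ⟨c, hc⟩ := Submodule.mem_span_singleton.mp m2
      obtain ⟨d, hd⟩ := Submodule.mem_span_singleton.mp m1
      have hcd : c • b₂ ⟨Sum.inr (), hv2⟩ = d • b₂ ⟨Sum.inl v, hv1⟩ := by
        rw [hb₂, hb₂]
        exact hc.trans hd.symm
      have hc0 : c = 0 := by
        have h := congrArg (fun z => b₂.repr z ⟨Sum.inr (), hv2⟩) hcd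
        simp only [map_smul, Module.Basis.repr_self, Finsupp.smul_apply, Finsupp.single_apply,
          smul_eq_mul] at h
        simpa [Subtype.ext_iff] using h
      have hx0 : A (Λ₁ (Sum.inl w)) - Λ₂ (Sum.inl w) = 0 := by
        rw [← hc, hc0, zero_smul]
      exact sub_eq_zero.mp hx0
end
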